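/- arXiv:1203.4290 — 4 statements merged into one kernel-verified Lean document; each statement's English description precedes it below -/
import Mathlib

section
/- If t = 0._n t_1 … t_k is a finite n-ary fraction (t = h/n^k for an integer h ≥ 0) and J = n^{-k}(C_0 + h_J) is an n-ary interval contained in both C_k and C_k + t (the interval case), then n^{-k}(C + h_J) ⊆ C ∩ (C + t). -/
open MeasureTheory Filter
open scoped ENNReal Topology Pointwise Classical

noncomputable section

/-- The deleted digits Cantor set `C_{n,D}`. -/
def cantorC (n : ℕ) (D : Finset ℤ) : Set ℝ :=
  {x | ∃ f : ℕ → ℤ, (∀ k, f k ∈ D) ∧ HasSum (fun k => (f k : ℝ) / (n : ℝ) ^ (k + 1)) x}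

/-- The `k`-th stage `C_k` of the construction of `C_{n,D}`. -/
def cantorStage (n : ℕ) (D : Finset ℤ) (k : ℕ) : Set ℝ :=
  {x | ∃ f : ℕ → ℤ, (∀ j, j < k → f j ∈ D) ∧
    ∃ r ∈ Set.Icc (0 : ℝ) (1 / (n : ℝ) ^ k),
      x = (∑ j ∈ Finset.range k, (f j : ℝ) / (n : ℝ) ^ (j + 1)) + r}

/-- Translate of a set of reals. -/
def transl (S : Set ℝ) (t : ℝ) : Set ℝ := {x | ∃ y ∈ S, x = y + t}

/-- The value `0._n t_1 t_2 ⋯` of a digit sequence. -/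
def digitVal (n : ℕ) (τ : ℕ → ℕ) : ℝ := ∑' k, (τ k : ℝ) / (n : ℝ) ^ (k + 1)

/-- Truncation `⌊t⌋_k` of a digit sequence to `k` digits. -/
def truncVal (n : ℕ) (τ : ℕ → ℕ) (k : ℕ) : ℝ :=
  ∑ j ∈ Finset.range k, (τ j : ℝ) / (n : ℝ) ^ (j + 1)


lemma trunc_int (n k : ℕ) (hn : 0 < n) (f : ℕ → ℤ) :
    (∑ j ∈ Finset.range k, (f j : ℝ) / (n : ℝ) ^ (j + 1)) * (n : ℝ) ^ k
      = ((∑ j ∈ Finset.range k, f j * (n : ℤ) ^ (k - 1 - j) : ℤ) : ℝ) := by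
  push_cast
  rw [Finset.sum_mul]
  refine Finset.sum_congr rfl fun j hj => ?_
  rw [Finset.mem_range] at hj
  have hpow : (n : ℝ) ^ k = (n : ℝ) ^ (j + 1) * (n : ℝ) ^ (k - 1 - j) := by
    rw [← pow_add]; congr 1; omega
  rw [hpow, div_mul_eq_mul_div, mul_comm ((n:ℝ)^(j+1)), mul_div_assoc]
  congr 1
  exact mul_div_cancel_right₀ _ (by positivity)

lemma midpoint_digits (n : ℕ) (hn : 3 ≤ n) (D : Finset ℤ) (k : ℕ) (m : ℤ)
    (hx : ((m : ℝ) + 1/2) / (n : ℝ) ^ k ∈ cantorStage n D k) :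
    ∃ f : ℕ → ℤ, (∀ j, j < k → f j ∈ D) ∧
      (∑ j ∈ Finset.range k, (f j : ℝ) / (n : ℝ) ^ (j + 1)) = (m : ℝ) / (n : ℝ) ^ k := by
  obtain ⟨f, hf, r, ⟨hr0, hr1⟩, hx⟩ := hx
  refine ⟨f, hf, ?_⟩
  have hnpos : (0 : ℝ) < (n : ℝ) ^ k := by positivity
  set S := ∑ j ∈ Finset.range k, (f j : ℝ) / (n : ℝ) ^ (j + 1) with hS
  set M : ℤ := ∑ j ∈ Finset.range k, f j * (n : ℤ) ^ (k - 1 - j) with hM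
  have hSM : S * (n : ℝ) ^ k = (M : ℝ) := trunc_int n k (by omega) f
  have heq : (m : ℝ) + 1/2 = (M : ℝ) + r * (n : ℝ) ^ k := by
    have := congrArg (fun z => z * (n : ℝ) ^ k) hx
    simp only [add_mul, div_mul_cancel₀ _ (ne_of_gt hnpos)] at this
    rw [this, hSM]
  have hr1' : r * (n : ℝ) ^ k ≤ 1 := by
    calc r * (n : ℝ) ^ k ≤ (1 / (n : ℝ) ^ k) * (n : ℝ) ^ k := by
          exact mul_le_mul_of_nonneg_right hr1 (le_of_lt hnpos)
      _ = 1 := by field_simp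
  have hr0' : 0 ≤ r * (n : ℝ) ^ k := mul_nonneg hr0 (le_of_lt hnpos)
  have h1 : ((M - m : ℤ) : ℝ) < 1 := by push_cast; linarith
  have h2 : (-1 : ℝ) < ((M - m : ℤ) : ℝ) := by push_cast; linarith
  have hMm : M = m := by
    have h1' : (M - m : ℤ) < 1 := by exact_mod_cast h1
    have h2' : (-1 : ℤ) < M - m := by exact_mod_cast h2
    omega
  rw [eq_div_iff (ne_of_gt hnpos), hSM, hMm]

lemma shift_mem (n : ℕ) (hn : 3 ≤ n) (D : Finset ℤ) (k : ℕ) (f : ℕ → ℤ)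
    (hf : ∀ j, j < k → f j ∈ D) (x : ℝ) (hx : x ∈ cantorC n D) :
    (∑ j ∈ Finset.range k, (f j : ℝ) / (n : ℝ) ^ (j + 1)) + x / (n : ℝ) ^ k ∈ cantorC n D := by
  obtain ⟨d, hd, hsum⟩ := hx
  have hnpos : (0 : ℝ) < (n : ℝ) ^ k := by positivity
  set g : ℕ → ℤ := fun j => if j < k then f j else d (j - k) with hg
  refine ⟨g, fun j => ?_, ?_⟩
  · by_cases hjk : j < k
    · simpa [hg, hjk] using hf j hjk
    · simpa [hg, hjk] using hd (j - k)
  · have h1 : HasSum (fun j => (g (j + k) : ℝ) / (n : ℝ) ^ (j + k + 1)) (x / (n : ℝ) ^ k) := by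
      have h2 := hsum.div_const ((n : ℝ) ^ k)
      refine h2.congr_fun fun j => ?_
      have : ¬ (j + k < k) := by omega
      simp only [hg, this, if_false, Nat.add_sub_cancel]
      rw [div_div, ← pow_add]
      congr 2
      omega
    have h3 := (hasSum_nat_add_iff (f := fun j => (g j : ℝ) / (n : ℝ) ^ (j + 1)) k).mp h1
    have h4 : ∑ i ∈ Finset.range k, (g i : ℝ) / (n : ℝ) ^ (i + 1)
        = ∑ j ∈ Finset.range k, (f j : ℝ) / (n : ℝ) ^ (j + 1) := by
      refine Finset.sum_congr rfl fun i hi => ?_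
      rw [Finset.mem_range] at hi
      simp [hg, hi]
    rw [h4] at h3
    rw [add_comm] at h3
    exact h3

/-- interval case for a finite `n`-ary fraction `t = h/n^k`:
an `n`-ary interval `J = n^{-k}(C_0 + h_J)` contained in both `C_k` and `C_k + t`
gives `n^{-k}(C + h_J) ⊆ C ∩ (C + t)`. -/
theorem interval_case_finite_rep (n : ℕ) (hn : 3 ≤ n) (D : Finset ℤ)
    (hD : ∀ d ∈ D, 0 ≤ d ∧ d < (n : ℤ)) (h0 : (0 : ℤ) ∈ D)
    (k : ℕ) (h : ℤ) (hh : 0 ≤ h) (hJ : ℤ)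
    (hJ1 : Set.Icc ((hJ : ℝ) / (n : ℝ) ^ k) (((hJ : ℝ) + 1) / (n : ℝ) ^ k) ⊆ cantorStage n D k)
    (hJ2 : Set.Icc ((hJ : ℝ) / (n : ℝ) ^ k) (((hJ : ℝ) + 1) / (n : ℝ) ^ k) ⊆
      transl (cantorStage n D k) ((h : ℝ) / (n : ℝ) ^ k)) :
    (fun x : ℝ => (x + (hJ : ℝ)) / (n : ℝ) ^ k) '' cantorC n D ⊆
      cantorC n D ∩ transl (cantorC n D) ((h : ℝ) / (n : ℝ) ^ k) := by
  
  rintro z ⟨x, hxC, rfl⟩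
  have hnpos : (0 : ℝ) < (n : ℝ) ^ k := by positivity
  have hmid1 : ((hJ : ℝ) + 1/2) / (n : ℝ) ^ k ∈
      Set.Icc ((hJ : ℝ) / (n : ℝ) ^ k) (((hJ : ℝ) + 1) / (n : ℝ) ^ k) := by
    constructor
    · apply div_le_div_of_nonneg_right (by linarith) hnpos.le
    · apply div_le_div_of_nonneg_right (by linarith) hnpos.le
  constructor
  · obtain ⟨f, hf, hfS⟩ := midpoint_digits n hn D k hJ (hJ1 hmid1)
    have := shift_mem n hn D k f hf x hxC
    rw [hfS] at this
    simpa [add_div, add_comm] using this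
  · obtain ⟨y, hyS, hy⟩ := hJ2 hmid1
    have hyval : y = (((hJ - h : ℤ) : ℝ) + 1/2) / (n : ℝ) ^ k := by
      push_cast
      have : y = ((hJ : ℝ) + 1/2) / (n : ℝ) ^ k - (h : ℝ) / (n : ℝ) ^ k := by linarith
      rw [this]
      field_simp
      ring
    rw [hyval] at hyS
    obtain ⟨g, hg, hgS⟩ := midpoint_digits n hn D k (hJ - h) hyS
    have hw := shift_mem n hn D k g hg x hxC
    rw [hgS] at hw
    refine ⟨((hJ - h : ℤ) : ℝ) / (n : ℝ) ^ k + x / (n : ℝ) ^ k, hw, ?_⟩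
    push_cast
    field_simp
    ring
end
end

section
/- Suppose J ⊆ C_k and K ⊆ C_k + ⌊t⌋_k are n-ary intervals with J = K + n^{-k} (potential interval case). Then the number of subintervals J(p) of the refinement of J that equal a subinterval K(q) + t_{k+1}/n^{k+1} of the translated refinement of K is exactly #(D ∩ (D + n − t_{k+1})), i.e., #{ (p,q) ∈ {1,…,m}² : n + d_p = d_q + t_{k+1} }. -/
open MeasureTheory Filter
open scoped ENNReal Topology Pointwise Classical

noncomputable section

/-- in the potential interval case `J = K + n^{-k}`, the number of
subintervals `J(p)` of the refinement of `J` equal to a translated subinterval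
`K(q) + t_{k+1}/n^{k+1}` of the refinement of `K` is exactly `#(D ∩ (D + n − t_{k+1}))`. -/
theorem potential_interval_case_transition_count (n : ℕ) (hn : 3 ≤ n) (D : Finset ℤ)
    (hD : ∀ d ∈ D, 0 ≤ d ∧ d < (n : ℤ)) (h0 : (0 : ℤ) ∈ D)
    (k : ℕ) (hK : ℤ) (t1 : ℕ) (ht1 : t1 < n) :
    (D.filter (fun p => ∃ q ∈ D,
        transl (Set.Icc (((hK * n + q : ℤ) : ℝ) / (n : ℝ) ^ (k + 1))
            (((hK * n + q + 1 : ℤ) : ℝ) / (n : ℝ) ^ (k + 1))) ((t1 : ℝ) / (n : ℝ) ^ (k + 1)) =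
          Set.Icc ((((hK + 1) * n + p : ℤ) : ℝ) / (n : ℝ) ^ (k + 1))
            ((((hK + 1) * n + p + 1 : ℤ) : ℝ) / (n : ℝ) ^ (k + 1)))).card =
      (D ∩ D.image (fun d => d + ((n : ℤ) - (t1 : ℤ)))).card := by
  have hnpos : (0:ℝ) < (n:ℝ) ^ (k+1) := by positivity
  have key : ∀ p ∈ D, ((∃ q ∈ D,
        transl (Set.Icc (((hK * n + q : ℤ) : ℝ) / (n : ℝ) ^ (k + 1))
            (((hK * n + q + 1 : ℤ) : ℝ) / (n : ℝ) ^ (k + 1))) ((t1 : ℝ) / (n : ℝ) ^ (k + 1)) =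
          Set.Icc ((((hK + 1) * n + p : ℤ) : ℝ) / (n : ℝ) ^ (k + 1))
            ((((hK + 1) * n + p + 1 : ℤ) : ℝ) / (n : ℝ) ^ (k + 1)))
      ↔ p + ((n:ℤ) - (t1:ℤ)) ∈ D) := by
    intro p hp
    have htr : ∀ a b t : ℝ, transl (Set.Icc a b) t = Set.Icc (a+t) (b+t) := by
      intro a b t
      ext x
      simp only [transl, Set.mem_Icc, Set.mem_setOf_eq]
      constructor
      · rintro ⟨y, ⟨h1, h2⟩, rfl⟩
        exact ⟨by linarith, by linarith⟩
      · rintro ⟨h1, h2⟩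
        exact ⟨x - t, ⟨by linarith, by linarith⟩, by ring⟩
    constructor
    · rintro ⟨q, hq, heq⟩
      rw [htr] at heq
      have hle : ((hK * n + q : ℤ) : ℝ) / (n : ℝ) ^ (k + 1) + (t1:ℝ) / (n:ℝ)^(k+1)
          ≤ ((hK * n + q + 1 : ℤ) : ℝ) / (n : ℝ) ^ (k + 1) + (t1:ℝ) / (n:ℝ)^(k+1) := by
        have : ((hK * n + q : ℤ) : ℝ) ≤ ((hK * n + q + 1 : ℤ) : ℝ) := by
          exact_mod_cast (by omega : (hK * n + q : ℤ) ≤ hK * n + q + 1)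
        gcongr
      have hle2 : (((hK + 1) * n + p : ℤ) : ℝ) / (n : ℝ) ^ (k + 1)
          ≤ (((hK + 1) * n + p + 1 : ℤ) : ℝ) / (n : ℝ) ^ (k + 1) := by
        have : (((hK + 1) * n + p : ℤ) : ℝ) ≤ (((hK + 1) * n + p + 1 : ℤ) : ℝ) := by
          exact_mod_cast (by omega : ((hK + 1) * n + p : ℤ) ≤ (hK + 1) * n + p + 1)
        gcongr
      have m1 : (((hK + 1) * n + p : ℤ) : ℝ) / (n : ℝ) ^ (k + 1) ∈
          Set.Icc (((hK * n + q : ℤ) : ℝ) / (n : ℝ) ^ (k + 1) + (t1:ℝ) / (n:ℝ)^(k+1))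
            (((hK * n + q + 1 : ℤ) : ℝ) / (n : ℝ) ^ (k + 1) + (t1:ℝ) / (n:ℝ)^(k+1)) := by
        rw [heq]; exact ⟨le_refl _, hle2⟩
      have m2 : ((hK * n + q : ℤ) : ℝ) / (n : ℝ) ^ (k + 1) + (t1:ℝ) / (n:ℝ)^(k+1) ∈
          Set.Icc ((((hK + 1) * n + p : ℤ) : ℝ) / (n : ℝ) ^ (k + 1))
            ((((hK + 1) * n + p + 1 : ℤ) : ℝ) / (n : ℝ) ^ (k + 1)) := by
        rw [← heq]; exact ⟨le_refl _, hle⟩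
      have h1 : ((hK * n + q : ℤ) : ℝ) / (n : ℝ) ^ (k + 1) + (t1:ℝ) / (n:ℝ)^(k+1)
          = (((hK + 1) * n + p : ℤ) : ℝ) / (n : ℝ) ^ (k + 1) :=
        le_antisymm m1.1 m2.1
      have h2 : ((hK * n + q : ℤ) : ℝ) + (t1:ℝ) = (((hK + 1) * n + p : ℤ) : ℝ) := by
        field_simp at h1
        push_cast
        push_cast at h1; linarith
      have h3 : (hK * n + q : ℤ) + (t1:ℤ) = (hK + 1) * n + p := by exact_mod_cast h2
      have : q = p + ((n:ℤ) - (t1:ℤ)) := by push_cast at h3 ⊢; linarith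
      rwa [← this]
    · intro hmem
      refine ⟨p + ((n:ℤ) - (t1:ℤ)), hmem, ?_⟩
      rw [htr, ← add_div, ← add_div]
      have e1 : ((hK * n + (p + ((n:ℤ) - (t1:ℤ))) : ℤ) : ℝ) + (t1:ℝ)
          = (((hK + 1) * n + p : ℤ) : ℝ) := by push_cast; ring
      have e2 : ((hK * n + (p + ((n:ℤ) - (t1:ℤ))) + 1 : ℤ) : ℝ) + (t1:ℝ)
          = (((hK + 1) * n + p + 1 : ℤ) : ℝ) := by push_cast; ring
      rw [e1, e2]
  rw [Finset.filter_congr key]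
  apply Finset.card_bij (fun p _ => p + ((n:ℤ) - (t1:ℤ)))
  · intro p hp
    simp only [Finset.mem_filter] at hp
    simp only [Finset.mem_inter, Finset.mem_image]
    exact ⟨hp.2, p, hp.1, rfl⟩
  · intro a ha b hb hab
    omega
  · intro x hx
    simp only [Finset.mem_inter, Finset.mem_image] at hx
    obtain ⟨hxD, d, hd, rfl⟩ := hx
    exact ⟨d, Finset.mem_filter.mpr ⟨hd, hxD⟩, rfl⟩
end
end

section
/- If D is not sparse, then there exists t ∈ F⁺ (namely t = δ/n for some δ ∈ Δ ∩ (Δ − 1)) such that C ∩ (C + t) contains a set of the form (1/n)(C + h) for some integer h; in particular C ∩ (C + t) is nonempty while both the interval case and the potential interval case occur simultaneously at level 1. -/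
open MeasureTheory Filter
open scoped ENNReal Topology Pointwise Classical

noncomputable section

lemma mem_cantorC_shift_div (n : ℕ) (D : Finset ℤ) (h : ℤ) (hh : h ∈ D)
    {x : ℝ} (hx : x ∈ cantorC n D) : (x + (h : ℝ)) / (n : ℝ) ∈ cantorC n D := by
  obtain ⟨f, hf, hs⟩ := hx
  refine ⟨fun k => Nat.rec h (fun m _ => f m) k, ?_, ?_⟩
  · intro k; cases k with
    | zero => exact hh
    | succ m => exact hf m
  · have key : HasSum (fun m : ℕ => ((f m : ℝ)) / (n : ℝ) ^ (m + 2)) (x / (n : ℝ)) := by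
      have := hs.div_const (n : ℝ)
      simp_rw [div_div, ← pow_succ] at this
      exact this
    have h1 : HasSum (fun m : ℕ =>
        ((Nat.rec h (fun m _ => f m) (m + 1) : ℤ) : ℝ) / (n : ℝ) ^ (m + 1 + 1))
        (x / (n : ℝ)) := key
    have h2 := (hasSum_nat_add_iff (f := fun k : ℕ =>
        ((Nat.rec h (fun m _ => f m) k : ℤ) : ℝ) / (n : ℝ) ^ (k + 1)) 1).mp h1
    simp only [Finset.range_one, Finset.sum_singleton] at h2
    convert h2 using 1
    show (x + (h : ℝ)) / (n : ℝ) = x / n + (h : ℝ) / (n : ℝ) ^ (0 + 1)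
    rw [pow_one, add_div]
    rfl

lemma cantorC_nonempty (n : ℕ) (D : Finset ℤ) (h0 : (0 : ℤ) ∈ D) :
    (cantorC n D).Nonempty := by
  refine ⟨(0 : ℝ), fun _ => (0 : ℤ), fun _ => h0, ?_⟩
  have : (fun k : ℕ => (((0 : ℤ) : ℝ)) / (n : ℝ) ^ (k + 1)) = fun _ => (0 : ℝ) := by
    funext k; simp
  rw [this]
  exact hasSum_zero

/-- if `D` is not sparse, there is `t = δ/n ∈ F⁺` with
`δ ∈ Δ ∩ (Δ − 1)` such that `C ∩ (C + t)` contains `(1/n)(C + h)` for some integer `h`;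
in particular `C ∩ (C + t)` is nonempty. -/
theorem not_sparse_gives_simultaneous (n : ℕ) (hn : 3 ≤ n) (D : Finset ℤ)
    (hD : ∀ d ∈ D, 0 ≤ d ∧ d < (n : ℤ)) (h0 : (0 : ℤ) ∈ D)
    (hns : ∃ δ : ℤ, δ ∈ D - D ∧ δ + 1 ∈ D - D) :
    ∃ δ : ℤ, 0 ≤ δ ∧ δ ∈ D - D ∧ δ + 1 ∈ D - D ∧
      (∃ h : ℤ, (fun x : ℝ => (x + (h : ℝ)) / (n : ℝ)) '' cantorC n D ⊆
        cantorC n D ∩ transl (cantorC n D) ((δ : ℝ) / (n : ℝ))) ∧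
      (cantorC n D ∩ transl (cantorC n D) ((δ : ℝ) / (n : ℝ))).Nonempty := by
  -- first get a nonnegative δ
  obtain ⟨δ₀, hδ₀, hδ₀1⟩ := hns
  have hsymm : ∀ a : ℤ, a ∈ D - D → -a ∈ D - D := by
    intro a ha
    rw [Finset.mem_sub] at ha ⊢
    obtain ⟨b, hb, c, hc, rfl⟩ := ha
    exact ⟨c, hc, b, hb, by ring⟩
  obtain ⟨δ, hδnn, hδ, hδ1⟩ : ∃ δ : ℤ, 0 ≤ δ ∧ δ ∈ D - D ∧ δ + 1 ∈ D - D := by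
    rcases le_or_gt 0 δ₀ with h | h
    · exact ⟨δ₀, h, hδ₀, hδ₀1⟩
    · exact ⟨-(δ₀ + 1), by omega, hsymm _ hδ₀1, by
        have := hsymm _ hδ₀; simpa [neg_add, sub_eq_add_neg] using this⟩
  refine ⟨δ, hδnn, hδ, hδ1, ?_, ?_⟩
  · rw [Finset.mem_sub] at hδ
    obtain ⟨a, ha, b, hb, hab⟩ := hδ
    refine ⟨a, ?_⟩
    rintro _ ⟨x, hx, rfl⟩
    refine ⟨mem_cantorC_shift_div n D a ha hx, (x + (b : ℝ)) / (n : ℝ),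
      mem_cantorC_shift_div n D b hb hx, ?_⟩
    have hn0 : (n : ℝ) ≠ 0 := by positivity
    have : (a : ℝ) = b + δ := by
      have : (a : ℤ) = b + δ := by omega
      exact_mod_cast congrArg (fun z : ℤ => (z : ℝ)) this
    field_simp
    linarith [this]
  · obtain ⟨x, hx⟩ := cantorC_nonempty n D h0
    rw [Finset.mem_sub] at hδ
    obtain ⟨a, ha, b, hb, hab⟩ := hδ
    refine ⟨(x + (a : ℝ)) / (n : ℝ), mem_cantorC_shift_div n D a ha hx,
      (x + (b : ℝ)) / (n : ℝ), mem_cantorC_shift_div n D b hb hx, ?_⟩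
    have hn0 : (n : ℝ) ≠ 0 := by positivity
    have : (a : ℝ) = b + δ := by
      have : (a : ℤ) = b + δ := by omega
      exact_mod_cast congrArg (fun z : ℤ => (z : ℝ)) this
    field_simp
    linarith [this]
end
end

section
/- Let s = log_n(m). Then the s-dimensional Hausdorff measure of C = C_{n,D} satisfies 1/m ≤ H^s(C) ≤ 1. -/
open MeasureTheory Filter
open scoped ENNReal Topology Pointwise Classical

noncomputable section

namespace CantorAux

lemma geom_sum_Ico {n : ℕ} (hn : 2 ≤ n) {a b : ℕ} (hab : a ≤ b) :
    ∑ j ∈ Finset.Ico a b, ((n : ℝ) - 1) / (n : ℝ) ^ (j + 1)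
      = 1 / (n : ℝ) ^ a - 1 / (n : ℝ) ^ b := by
  have hn0 : (0:ℝ) < n := by exact_mod_cast Nat.lt_of_lt_of_le Nat.zero_lt_two hn
  induction b, hab using Nat.le_induction with
  | base => simp
  | succ b hab ih =>
      rw [Finset.sum_Ico_succ_top hab, ih]
      have h1 : (n:ℝ)^b ≠ 0 := by positivity
      have h2 : (n:ℝ)^(b+1) ≠ 0 := by positivity
      field_simp
      ring

lemma tsum_geom_tail {n : ℕ} (hn : 2 ≤ n) (K : ℕ) :
    ∑' j : ℕ, ((n : ℝ) - 1) / (n : ℝ) ^ (j + K + 1) = 1 / (n : ℝ) ^ K := by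
  have hn0 : (0:ℝ) < n := by exact_mod_cast Nat.lt_of_lt_of_le Nat.zero_lt_two hn
  have hn1 : (1:ℝ) < n := by exact_mod_cast Nat.lt_of_lt_of_le Nat.one_lt_two hn
  have hgeo := tsum_geometric_of_lt_one (r := 1 / (n:ℝ)) (by positivity)
    (by rw [div_lt_one hn0]; exact hn1)
  have heq : ∀ j : ℕ, ((n : ℝ) - 1) / (n : ℝ) ^ (j + K + 1)
      = (((n:ℝ) - 1) / (n:ℝ) ^ (K+1)) * (1 / (n:ℝ)) ^ j := by
    intro j
    rw [one_div, inv_pow, ← one_div, div_mul_div_comm, mul_one,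
      show j + K + 1 = (K+1) + j from by omega, pow_add]
  rw [tsum_congr heq, tsum_mul_left, hgeo]
  have h2 : (n:ℝ)^(K+1) ≠ 0 := by positivity
  have h3 : (n:ℝ) - 1 ≠ 0 := by nlinarith
  have h4 : (n:ℝ)^K ≠ 0 := by positivity
  rw [pow_succ]
  field_simp

lemma summable_digits {n : ℕ} (hn : 2 ≤ n) (f : ℕ → ℤ)
    (hf : ∀ j, 0 ≤ f j ∧ f j ≤ (n:ℤ) - 1) :
    Summable (fun j => (f j : ℝ) / (n : ℝ) ^ (j + 1)) := by
  have hn0 : (0:ℝ) < n := by exact_mod_cast Nat.lt_of_lt_of_le Nat.zero_lt_two hn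
  have hn1 : (1:ℝ) < n := by exact_mod_cast Nat.lt_of_lt_of_le Nat.one_lt_two hn
  have hs : Summable (fun j : ℕ => ((n:ℝ) - 1) * (1 / (n:ℝ)) ^ (j+1)) := by
    have h := (summable_geometric_of_lt_one (r := 1/(n:ℝ)) (by positivity)
      (by rw [div_lt_one hn0]; exact hn1))
    exact ((h.mul_left ((n:ℝ) - 1)).comp_injective (add_left_injective 1))
  refine Summable.of_nonneg_of_le (fun j => ?_) (fun j => ?_) hs
  · have := (hf j).1
    positivity
  · rw [one_div, inv_pow, ← one_div, mul_one_div]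
    have h1 : (f j : ℝ) ≤ (n:ℝ) - 1 := by exact_mod_cast (hf j).2
    exact div_le_div_of_nonneg_right h1 (by positivity)

lemma tail_nonneg {n : ℕ} (hn : 2 ≤ n) (f : ℕ → ℤ)
    (hf : ∀ j, 0 ≤ f j ∧ f j ≤ (n:ℤ) - 1) (K : ℕ) :
    0 ≤ ∑' j : ℕ, (f (j + K) : ℝ) / (n : ℝ) ^ (j + K + 1) := by
  have hn0 : (0:ℝ) < n := by exact_mod_cast Nat.lt_of_lt_of_le Nat.zero_lt_two hn
  refine tsum_nonneg fun j => ?_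
  have := (hf (j+K)).1
  positivity

lemma summable_const_digit {n : ℕ} (hn : 2 ≤ n) :
    Summable (fun j : ℕ => ((n:ℝ) - 1) / (n : ℝ) ^ (j + 1)) := by
  have hn0 : (0:ℝ) < n := by exact_mod_cast Nat.lt_of_lt_of_le Nat.zero_lt_two hn
  have hn1 : (1:ℝ) < n := by exact_mod_cast Nat.lt_of_lt_of_le Nat.one_lt_two hn
  have h := (summable_geometric_of_lt_one (r := 1/(n:ℝ)) (by positivity)
    (by rw [div_lt_one hn0]; exact hn1))
  have h2 := (h.mul_left ((n:ℝ) - 1)).comp_injective (add_left_injective 1)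
  refine h2.congr fun j => ?_
  show ((n:ℝ) - 1) * (1/(n:ℝ)) ^ (j+1) = ((n:ℝ) - 1) / (n : ℝ) ^ (j + 1)
  rw [one_div, inv_pow, ← one_div, mul_one_div]

lemma tail_le {n : ℕ} (hn : 2 ≤ n) (f : ℕ → ℤ)
    (hf : ∀ j, 0 ≤ f j ∧ f j ≤ (n:ℤ) - 1) (K : ℕ) :
    ∑' j : ℕ, (f (j + K) : ℝ) / (n : ℝ) ^ (j + K + 1) ≤ 1 / (n : ℝ) ^ K := by
  have hn0 : (0:ℝ) < n := by exact_mod_cast Nat.lt_of_lt_of_le Nat.zero_lt_two hn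
  have hsum : Summable (fun j : ℕ => (f (j + K) : ℝ) / (n : ℝ) ^ (j + K + 1)) :=
    (summable_nat_add_iff (f := fun j : ℕ => (f j : ℝ) / (n : ℝ) ^ (j + 1)) K).2
      (summable_digits hn f hf)
  have hsum2 : Summable (fun j : ℕ => ((n:ℝ) - 1) / (n : ℝ) ^ (j + K + 1)) :=
    (summable_nat_add_iff (f := fun j : ℕ => ((n:ℝ) - 1) / (n : ℝ) ^ (j + 1)) K).2
      (summable_const_digit hn)
  calc ∑' j : ℕ, (f (j + K) : ℝ) / (n : ℝ) ^ (j + K + 1)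
      ≤ ∑' j : ℕ, ((n:ℝ) - 1) / (n : ℝ) ^ (j + K + 1) := by
        refine hsum.tsum_le_tsum (fun j => ?_) hsum2
        have h1 : (f (j+K) : ℝ) ≤ (n:ℝ) - 1 := by exact_mod_cast (hf (j+K)).2
        exact div_le_div_of_nonneg_right h1 (by positivity)
    _ = 1 / (n : ℝ) ^ K := tsum_geom_tail hn K

/-- Splitting a convergent digit series into prefix and tail. -/
lemma split_sum {n : ℕ} (hn : 2 ≤ n) (f : ℕ → ℤ)
    (hf : ∀ j, 0 ≤ f j ∧ f j ≤ (n:ℤ) - 1) {x : ℝ}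
    (hx : HasSum (fun k => (f k : ℝ) / (n : ℝ) ^ (k + 1)) x) (K : ℕ) :
    x = (∑ j ∈ Finset.range K, (f j : ℝ) / (n : ℝ) ^ (j + 1))
      + ∑' j : ℕ, (f (j + K) : ℝ) / (n : ℝ) ^ (j + K + 1) := by
  have hsum := summable_digits hn f hf
  have h2 := (Summable.sum_add_tsum_nat_add K hsum).symm
  rw [hx.tsum_eq] at h2
  exact h2

/-- `j`-th digit of `x` in base `m`. -/
def digE (m : ℕ) (x : ℝ) (j : ℕ) : ℕ := (⌊x * (m:ℝ)^(j+1)⌋ - m * ⌊x * (m:ℝ)^j⌋).toNat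

lemma digE_int (m : ℕ) (hm : 0 < m) (x : ℝ) (j : ℕ) :
    (digE m x j : ℤ) = ⌊x * (m:ℝ)^(j+1)⌋ - m * ⌊x * (m:ℝ)^j⌋ := by
  have hm0 : (0:ℝ) < m := by exact_mod_cast hm
  rw [digE, Int.toNat_of_nonneg]
  have h1 : ((m:ℤ) * ⌊x * (m:ℝ)^j⌋ : ℤ) ≤ ⌊x * (m:ℝ)^(j+1)⌋ := by
    rw [Int.le_floor]
    push_cast
    calc (m:ℝ) * ⌊x * (m:ℝ)^j⌋ ≤ (m:ℝ) * (x * (m:ℝ)^j) := by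
          exact mul_le_mul_of_nonneg_left (Int.floor_le _) (le_of_lt hm0)
      _ = x * (m:ℝ)^(j+1) := by ring
  omega

lemma digE_lt (m : ℕ) (hm : 0 < m) (x : ℝ) (j : ℕ) : digE m x j < m := by
  have hm0 : (0:ℝ) < m := by exact_mod_cast hm
  have h2 : ⌊x * (m:ℝ)^(j+1)⌋ < (m:ℤ) * ⌊x * (m:ℝ)^j⌋ + m := by
    rw [Int.floor_lt]
    push_cast
    calc x * (m:ℝ)^(j+1) = (m:ℝ) * (x * (m:ℝ)^j) := by ring
      _ < (m:ℝ) * (⌊x * (m:ℝ)^j⌋ + 1) := by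
          exact mul_lt_mul_of_pos_left (Int.lt_floor_add_one _) hm0
      _ = (m:ℝ) * ⌊x * (m:ℝ)^j⌋ + m := by ring
  have h3 := digE_int m hm x j
  omega

/-- Integer value of a digit string. -/
def digF (m : ℕ) (c : ℕ → ℕ) : ℕ → ℤ
  | 0 => 0
  | K+1 => m * digF m c K + c K

lemma floor_eq_digF (m : ℕ) (hm : 0 < m) (c : ℕ → ℕ) {x : ℝ}
    (hx : x ∈ Set.Ico (0:ℝ) 1) (K : ℕ) (hc : ∀ j < K, digE m x j = c j) :
    ⌊x * (m:ℝ)^K⌋ = digF m c K := by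
  induction K with
  | zero =>
      simp only [pow_zero, mul_one, digF]
      exact Int.floor_eq_zero_iff.2 (by exact hx)
  | succ K ih =>
      have h1 := digE_int m hm x K
      have h2 : digE m x K = c K := hc K (Nat.lt_succ_self K)
      have h3 : ⌊x * (m:ℝ)^K⌋ = digF m c K := ih (fun j hj => hc j (Nat.lt_succ_of_lt hj))
      show ⌊x * (m:ℝ)^(K+1)⌋ = m * digF m c K + c K
      have h4 : (⌊x * (m:ℝ)^(K+1)⌋ : ℤ) = m * ⌊x * (m:ℝ)^K⌋ + (digE m x K : ℤ) := by omega
      rw [h4, h3, h2]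

/-- The set of points in `[0,1)` with a given digit prefix is inside an interval of
length `m^{-K}`. -/
lemma prefix_subset (m : ℕ) (hm : 0 < m) (c : ℕ → ℕ) (K : ℕ) :
    {x : ℝ | x ∈ Set.Ico (0:ℝ) 1 ∧ ∀ j < K, digE m x j = c j}
      ⊆ Set.Ico ((digF m c K : ℝ) / (m:ℝ)^K) ((digF m c K : ℝ) / (m:ℝ)^K + 1/(m:ℝ)^K) := by
  intro x hx
  have hm0 : (0:ℝ) < m := by exact_mod_cast hm
  have hK : (0:ℝ) < (m:ℝ)^K := by positivity
  have h := floor_eq_digF m hm c hx.1 K hx.2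
  have h1 : (digF m c K : ℝ) ≤ x * (m:ℝ)^K := by rw [← h]; exact Int.floor_le _
  have h2 : x * (m:ℝ)^K < (digF m c K : ℝ) + 1 := by rw [← h]; exact Int.lt_floor_add_one _
  constructor
  · rw [div_le_iff₀ hK]; linarith
  · have h4 : x < ((digF m c K : ℝ) + 1) / (m:ℝ)^K := by
      rw [lt_div_iff₀ hK]; linarith
    calc x < ((digF m c K : ℝ) + 1) / (m:ℝ)^K := h4
      _ = (digF m c K : ℝ) / (m:ℝ)^K + 1/(m:ℝ)^K := by ring
  
lemma prefix_vol (m : ℕ) (hm : 0 < m) (c : ℕ → ℕ) (K : ℕ) :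
    volume {x : ℝ | x ∈ Set.Ico (0:ℝ) 1 ∧ ∀ j < K, digE m x j = c j}
      ≤ ENNReal.ofReal (1/(m:ℝ)^K) := by
  calc volume {x : ℝ | x ∈ Set.Ico (0:ℝ) 1 ∧ ∀ j < K, digE m x j = c j}
      ≤ volume (Set.Ico ((digF m c K : ℝ) / (m:ℝ)^K)
          ((digF m c K : ℝ) / (m:ℝ)^K + 1/(m:ℝ)^K)) :=
        measure_mono (prefix_subset m hm c K)
    _ = ENNReal.ofReal (1/(m:ℝ)^K) := by rw [Real.volume_Ico]; ring_nf

/-- The `i`-th smallest element of `D`. -/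
def dig (D : Finset ℤ) (i : Fin D.card) : ℤ := ((D.orderIsoOfFin rfl i : {x // x ∈ D}) : ℤ)

lemma dig_mem (D : Finset ℤ) (i : Fin D.card) : dig D i ∈ D := (D.orderIsoOfFin rfl i).2

lemma dig_strictMono (D : Finset ℤ) : StrictMono (dig D) := fun i j h => by
  have := (D.orderIsoOfFin rfl).strictMono h
  exact_mod_cast this

lemma dig_le_iff (D : Finset ℤ) {i j : Fin D.card} : dig D i ≤ dig D j ↔ i ≤ j :=
  (dig_strictMono D).le_iff_le

lemma dig_inj (D : Finset ℤ) : Function.Injective (dig D) := (dig_strictMono D).injective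

lemma dig_bounds {n : ℕ} {D : Finset ℤ} (hD : ∀ d ∈ D, 0 ≤ d ∧ d < (n : ℤ)) (i : Fin D.card) :
    0 ≤ dig D i ∧ dig D i ≤ (n:ℤ) - 1 := by
  have h := hD _ (dig_mem D i)
  omega

/-- Value of a digit code word of length `K`. -/
def valC (n : ℕ) (D : Finset ℤ) (K : ℕ) (c : ℕ → Fin D.card) : ℝ :=
  ∑ j ∈ Finset.range K, (dig D (c j) : ℝ) / (n:ℝ)^(j+1)

lemma valC_congr {n : ℕ} {D : Finset ℤ} {K : ℕ} {c c' : ℕ → Fin D.card}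
    (h : ∀ j < K, c j = c' j) : valC n D K c = valC n D K c' :=
  Finset.sum_congr rfl (fun j hj => by rw [h j (Finset.mem_range.1 hj)])

lemma sep_core {n : ℕ} (hn : 2 ≤ n) {D : Finset ℤ} (hD : ∀ d ∈ D, 0 ≤ d ∧ d < (n : ℤ))
    {K j0 : ℕ} (hj0 : j0 < K) (c c' : ℕ → Fin D.card)
    (heq : ∀ j < j0, c j = c' j) (hlt : dig D (c j0) < dig D (c' j0)) :
    1/(n:ℝ)^K ≤ valC n D K c' - valC n D K c := by
  have hn0 : (0:ℝ) < n := by exact_mod_cast Nat.lt_of_lt_of_le Nat.zero_lt_two hn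
  have hsub : valC n D K c' - valC n D K c
      = ∑ j ∈ Finset.range K, ((dig D (c' j) : ℝ) - dig D (c j)) / (n:ℝ)^(j+1) := by
    rw [valC, valC, ← Finset.sum_sub_distrib]
    exact Finset.sum_congr rfl fun j _ => by ring
  rw [hsub, Finset.range_eq_Ico,
    ← Finset.sum_Ico_consecutive _ (Nat.zero_le j0) hj0.le,
    Finset.sum_eq_sum_Ico_succ_bot hj0]
  have e1 : ∑ j ∈ Finset.Ico 0 j0, ((dig D (c' j) : ℝ) - dig D (c j)) / (n:ℝ)^(j+1) = 0 := by
    refine Finset.sum_eq_zero fun j hj => ?_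
    rw [heq j (Finset.mem_Ico.1 hj).2]
    ring
  have e2 : 1/(n:ℝ)^(j0+1) ≤ ((dig D (c' j0) : ℝ) - dig D (c j0)) / (n:ℝ)^(j0+1) := by
    apply div_le_div_of_nonneg_right _ (by positivity)
    have : (1:ℤ) ≤ dig D (c' j0) - dig D (c j0) := by omega
    have h2 : (1:ℝ) ≤ (dig D (c' j0) : ℝ) - dig D (c j0) := by exact_mod_cast this
    linarith
  have e3 : -(1/(n:ℝ)^(j0+1) - 1/(n:ℝ)^K)
      ≤ ∑ j ∈ Finset.Ico (j0+1) K, ((dig D (c' j) : ℝ) - dig D (c j)) / (n:ℝ)^(j+1) := by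
    rw [← geom_sum_Ico hn hj0, ← Finset.sum_neg_distrib]
    refine Finset.sum_le_sum fun j _ => ?_
    rw [← neg_div]
    apply div_le_div_of_nonneg_right _ (by positivity)
    have h1 := dig_bounds hD (c j)
    have h2 := dig_bounds hD (c' j)
    have h3 : -((n:ℝ) - 1) ≤ (dig D (c' j) : ℝ) - dig D (c j) := by
      have : -((n:ℤ) - 1) ≤ dig D (c' j) - dig D (c j) := by omega
      exact_mod_cast this
    linarith
  linarith

lemma sep {n : ℕ} (hn : 2 ≤ n) {D : Finset ℤ} (hD : ∀ d ∈ D, 0 ≤ d ∧ d < (n : ℤ))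
    {K : ℕ} (c c' : ℕ → Fin D.card) (hne : ∃ j < K, c j ≠ c' j) :
    1/(n:ℝ)^K ≤ |valC n D K c' - valC n D K c| := by
  classical
  set T := (Finset.range K).filter (fun j => c j ≠ c' j) with hT
  have hTne : T.Nonempty := by
    obtain ⟨j, hj, hne⟩ := hne
    exact ⟨j, by simp [hT, hj, hne]⟩
  set j0 := T.min' hTne with hj0def
  have hj0T : j0 ∈ T := T.min'_mem hTne
  have hj0K : j0 < K := Finset.mem_range.1 (Finset.mem_filter.1 hj0T).1
  have hj0ne : c j0 ≠ c' j0 := (Finset.mem_filter.1 hj0T).2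
  have heq : ∀ j < j0, c j = c' j := by
    intro j hj
    by_contra hh
    have hjT : j ∈ T := Finset.mem_filter.2 ⟨Finset.mem_range.2 (hj.trans hj0K), hh⟩
    exact absurd (T.min'_le j hjT) (by omega)
  have hdig : dig D (c j0) ≠ dig D (c' j0) := fun h => hj0ne (dig_inj D h)
  have hn0 : (0:ℝ) < n := by exact_mod_cast Nat.lt_of_lt_of_le Nat.zero_lt_two hn
  have hp : (0:ℝ) < 1/(n:ℝ)^K := by positivity
  rcases lt_or_gt_of_ne hdig with h | h
  · have h2 := sep_core hn hD hj0K c c' heq h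
    rw [abs_of_nonneg (by linarith)]
    exact h2
  · have h2 := sep_core hn hD hj0K c' c (fun j hj => (heq j hj).symm) h
    rw [abs_sub_comm, abs_of_nonneg (by linarith)]
    exact h2

lemma code_eq_of_close {n : ℕ} (hn : 2 ≤ n) {D : Finset ℤ}
    (hD : ∀ d ∈ D, 0 ≤ d ∧ d < (n : ℤ)) {K : ℕ} (c c' : ℕ → Fin D.card)
    (h : |valC n D K c' - valC n D K c| < 1/(n:ℝ)^K) : ∀ j < K, c j = c' j := by
  intro j hj
  by_contra hh
  exact absurd (sep hn hD c c' ⟨j, hj, hh⟩) (not_le.2 h)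

/-- Digit code of a real number. -/
def pdig (D : Finset ℤ) (hc : 0 < D.card) (x : ℝ) (j : ℕ) : Fin D.card :=
  ⟨digE D.card x j, digE_lt D.card hc x j⟩

/-- The coding map from `[0,1)` onto the Cantor set. -/
def gmap (n : ℕ) (D : Finset ℤ) (hc : 0 < D.card) (x : ℝ) : ℝ :=
  ∑' j : ℕ, (dig D (pdig D hc x j) : ℝ) / (n:ℝ)^(j+1)

def extC (D : Finset ℤ) (hc : 0 < D.card) {K : ℕ} (c : Fin K → Fin D.card) :
    ℕ → Fin D.card := fun j => if h : j < K then c ⟨j, h⟩ else ⟨0, hc⟩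

lemma extC_lt (D : Finset ℤ) (hc : 0 < D.card) {K : ℕ} (c : Fin K → Fin D.card)
    {j : ℕ} (h : j < K) : extC D hc c j = c ⟨j, h⟩ := dif_pos h

lemma gmap_hasSum {n : ℕ} (hn : 2 ≤ n) {D : Finset ℤ}
    (hD : ∀ d ∈ D, 0 ≤ d ∧ d < (n : ℤ)) (hc : 0 < D.card) (x : ℝ) :
    HasSum (fun j => (dig D (pdig D hc x j) : ℝ) / (n:ℝ)^(j+1)) (gmap n D hc x) :=
  (summable_digits hn _ (fun j => dig_bounds hD _)).hasSum

lemma gmap_mem {n : ℕ} (hn : 2 ≤ n) {D : Finset ℤ}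
    (hD : ∀ d ∈ D, 0 ≤ d ∧ d < (n : ℤ)) (hc : 0 < D.card) (x : ℝ) :
    gmap n D hc x ∈ cantorC n D := by
  refine ⟨fun j => dig D (pdig D hc x j), fun j => dig_mem D _, ?_⟩
  exact gmap_hasSum hn hD hc x

lemma gmap_cell {n : ℕ} (hn : 2 ≤ n) {D : Finset ℤ}
    (hD : ∀ d ∈ D, 0 ≤ d ∧ d < (n : ℤ)) (hc : 0 < D.card) (x : ℝ) (K : ℕ) :
    valC n D K (pdig D hc x) ≤ gmap n D hc x ∧
      gmap n D hc x ≤ valC n D K (pdig D hc x) + 1/(n:ℝ)^K := by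
  have hsplit := split_sum hn (fun j => dig D (pdig D hc x j))
    (fun j => dig_bounds hD _) (gmap_hasSum hn hD hc x) K
  have h1 := tail_nonneg hn (fun j => dig D (pdig D hc x j)) (fun j => dig_bounds hD _) K
  have h2 := tail_le hn (fun j => dig D (pdig D hc x j)) (fun j => dig_bounds hD _) K
  constructor
  · rw [hsplit]; unfold valC; linarith
  · rw [hsplit]; unfold valC; linarith

lemma pset_vol {D : Finset ℤ} (hc : 0 < D.card) (c : ℕ → Fin D.card) (K : ℕ) :
    volume {x : ℝ | x ∈ Set.Ico (0:ℝ) 1 ∧ ∀ j < K, pdig D hc x j = c j}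
      ≤ ENNReal.ofReal (1/(D.card:ℝ)^K) := by
  refine le_trans (measure_mono ?_) (prefix_vol D.card hc (fun j => (c j).val) K)
  intro x hx
  exact ⟨hx.1, fun j hj => by
    rw [show digE D.card x j = (pdig D hc x j).val from rfl, hx.2 j hj]⟩

lemma Ey_vol {n : ℕ} (hn : 2 ≤ n) {D : Finset ℤ}
    (hD : ∀ d ∈ D, 0 ≤ d ∧ d < (n : ℤ)) (hc : 0 < D.card) (hc2 : 2 ≤ D.card) (y : ℝ) :
    volume {x : ℝ | x ∈ Set.Ico (0:ℝ) 1 ∧ gmap n D hc x = y} = 0 := by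
  have hn0 : (0:ℝ) < n := by exact_mod_cast Nat.lt_of_lt_of_le Nat.zero_lt_two hn
  have hm1 : (1:ℝ) < D.card := by exact_mod_cast hc2
  have key : ∀ K : ℕ, volume {x : ℝ | x ∈ Set.Ico (0:ℝ) 1 ∧ gmap n D hc x = y}
      ≤ ENNReal.ofReal (2/(D.card:ℝ)^K) := by
    intro K
    classical
    have hnK : (0:ℝ) < (n:ℝ)^K := by positivity
    set F : Finset (Fin K → Fin D.card) := Finset.univ.filter
      (fun c => valC n D K (extC D hc c) ∈ Set.Icc (y - 1/(n:ℝ)^K) y) with hF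
    have cover : {x : ℝ | x ∈ Set.Ico (0:ℝ) 1 ∧ gmap n D hc x = y}
        ⊆ ⋃ c ∈ F, {x : ℝ | x ∈ Set.Ico (0:ℝ) 1 ∧ ∀ j < K, pdig D hc x j = extC D hc c j} := by
      intro x hx
      set c : Fin K → Fin D.card := fun j => pdig D hc x j.val with hcdef
      have hecc : ∀ j < K, extC D hc c j = pdig D hc x j := fun j hj => extC_lt D hc c hj
      have hval : valC n D K (extC D hc c) = valC n D K (pdig D hc x) := valC_congr hecc
      have hcell := gmap_cell hn hD hc x K
      have hcF : c ∈ F := by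
        rw [hF, Finset.mem_filter]
        refine ⟨Finset.mem_univ _, ?_⟩
        rw [hval]
        constructor
        · rw [← hx.2]; linarith [hcell.2]
        · rw [← hx.2]; exact hcell.1
      exact Set.mem_biUnion hcF ⟨hx.1, fun j hj => (hecc j hj).symm⟩
    have hcard : F.card ≤ 2 := by
      have hsub : ∀ c ∈ F, ⌊valC n D K (extC D hc c) * (n:ℝ)^K⌋
          ∈ ({⌊y * (n:ℝ)^K⌋ - 1, ⌊y * (n:ℝ)^K⌋} : Finset ℤ) := by
        intro c hcF
        rw [hF, Finset.mem_filter] at hcF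
        obtain ⟨hv1, hv2⟩ := hcF.2
        have hA1 : ⌊valC n D K (extC D hc c) * (n:ℝ)^K⌋ ≤ ⌊y * (n:ℝ)^K⌋ :=
          Int.floor_le_floor (mul_le_mul_of_nonneg_right hv2 hnK.le)
        have hA2 : ⌊y * (n:ℝ)^K⌋ - 1 ≤ ⌊valC n D K (extC D hc c) * (n:ℝ)^K⌋ := by
          have : y * (n:ℝ)^K - 1 ≤ valC n D K (extC D hc c) * (n:ℝ)^K := by
            have h3 : (y - 1/(n:ℝ)^K) * (n:ℝ)^K = y * (n:ℝ)^K - 1 := by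
              field_simp
            nlinarith [mul_le_mul_of_nonneg_right hv1 hnK.le]
          calc ⌊y * (n:ℝ)^K⌋ - 1 = ⌊y * (n:ℝ)^K - 1⌋ := by
                rw [show y * (n:ℝ)^K - 1 = y * (n:ℝ)^K - (1:ℤ) from by push_cast; ring,
                  Int.floor_sub_intCast]
            _ ≤ ⌊valC n D K (extC D hc c) * (n:ℝ)^K⌋ := Int.floor_le_floor this
        simp only [Finset.mem_insert, Finset.mem_singleton]
        omega
      have hinj : Set.InjOn (fun c => ⌊valC n D K (extC D hc c) * (n:ℝ)^K⌋) (↑F : Set (Fin K → Fin D.card)) := by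
        intro c hcF c' hcF' hAeq
        simp only at hAeq
        have hlt : |valC n D K (extC D hc c') - valC n D K (extC D hc c)| < 1/(n:ℝ)^K := by
          set a := valC n D K (extC D hc c) * (n:ℝ)^K with ha
          set b := valC n D K (extC D hc c') * (n:ℝ)^K with hb
          have h1 : (⌊a⌋ : ℝ) ≤ a := Int.floor_le a
          have h2 : a < ⌊a⌋ + 1 := Int.lt_floor_add_one a
          have h3 : (⌊b⌋ : ℝ) ≤ b := Int.floor_le b
          have h4 : b < ⌊b⌋ + 1 := Int.lt_floor_add_one b
          rw [hAeq] at h1 h2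
          have h5 : |b - a| < 1 := by rw [abs_sub_lt_iff]; constructor <;> linarith
          have h6 : valC n D K (extC D hc c') - valC n D K (extC D hc c)
              = (b - a) / (n:ℝ)^K := by rw [ha, hb]; field_simp
          rw [h6, abs_div, abs_of_pos hnK]
          gcongr
        have heq := code_eq_of_close hn hD _ _ hlt
        funext j
        have h7 := heq j.val j.isLt
        rw [extC_lt D hc c j.isLt, extC_lt D hc c' j.isLt] at h7
        simpa using h7
      calc F.card ≤ ({⌊y * (n:ℝ)^K⌋ - 1, ⌊y * (n:ℝ)^K⌋} : Finset ℤ).card :=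
            Finset.card_le_card_of_injOn _ hsub hinj
        _ ≤ 2 := by
            refine le_trans (Finset.card_insert_le _ _) ?_
            simp
    calc volume {x : ℝ | x ∈ Set.Ico (0:ℝ) 1 ∧ gmap n D hc x = y}
        ≤ ∑ c ∈ F, volume {x : ℝ | x ∈ Set.Ico (0:ℝ) 1 ∧
            ∀ j < K, pdig D hc x j = extC D hc c j} :=
          le_trans (measure_mono cover) (measure_biUnion_finset_le _ _)
      _ ≤ ∑ _c ∈ F, ENNReal.ofReal (1/(D.card:ℝ)^K) :=
          Finset.sum_le_sum (fun c _ => pset_vol hc (extC D hc c) K)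
      _ = F.card * ENNReal.ofReal (1/(D.card:ℝ)^K) := by
          rw [Finset.sum_const, nsmul_eq_mul]
      _ ≤ 2 * ENNReal.ofReal (1/(D.card:ℝ)^K) := by
          gcongr
          exact_mod_cast hcard
      _ = ENNReal.ofReal (2/(D.card:ℝ)^K) := by
          rw [← ENNReal.ofReal_ofNat, ← ENNReal.ofReal_mul (by norm_num)]
          ring_nf
  have htends : Tendsto (fun K : ℕ => ENNReal.ofReal (2/(D.card:ℝ)^K)) atTop (𝓝 0) := by
    have hr : Tendsto (fun K : ℕ => 2/(D.card:ℝ)^K) atTop (𝓝 0) :=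
      Tendsto.div_atTop tendsto_const_nhds (tendsto_pow_atTop_atTop_of_one_lt hm1)
    have := ENNReal.tendsto_ofReal hr
    simpa using this
  have := ge_of_tendsto' htends key
  exact le_antisymm this zero_le

lemma cell_vol {n : ℕ} (hn : 2 ≤ n) {D : Finset ℤ}
    (hD : ∀ d ∈ D, 0 ≤ d ∧ d < (n : ℤ)) (hc : 0 < D.card) (hc2 : 2 ≤ D.card)
    (K : ℕ) (c : ℕ → Fin D.card) :
    volume {x : ℝ | x ∈ Set.Ico (0:ℝ) 1 ∧ gmap n D hc x ∈
      Set.Icc (valC n D K c) (valC n D K c + 1/(n:ℝ)^K)}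
      ≤ ENNReal.ofReal (1/(D.card:ℝ)^K) := by
  set v := valC n D K c with hv
  have hsubset : {x : ℝ | x ∈ Set.Ico (0:ℝ) 1 ∧ gmap n D hc x ∈ Set.Icc v (v + 1/(n:ℝ)^K)}
      ⊆ {x : ℝ | x ∈ Set.Ico (0:ℝ) 1 ∧ ∀ j < K, pdig D hc x j = c j}
        ∪ ({x : ℝ | x ∈ Set.Ico (0:ℝ) 1 ∧ gmap n D hc x = v}
          ∪ {x : ℝ | x ∈ Set.Ico (0:ℝ) 1 ∧ gmap n D hc x = v + 1/(n:ℝ)^K}) := by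
    intro x hx
    by_cases hcase : ∀ j < K, pdig D hc x j = c j
    · exact Or.inl ⟨hx.1, hcase⟩
    · push_neg at hcase
      obtain ⟨j, hj, hne⟩ := hcase
      have hsep := sep hn hD c (pdig D hc x) ⟨j, hj, fun h => hne h.symm⟩
      have hcell := gmap_cell hn hD hc x K
      have hg1 := hx.2.1
      have hg2 := hx.2.2
      rcases le_abs'.1 hsep with h | h
      · -- valC (pdig x) - v ≤ -(1/n^K) i.e. 1/n^K ≤ -(valC pdig - v)
        -- here h : 1/n^K ≤ -(valC pdig - valC c) -- check orientation below
        refine Or.inr (Or.inl ⟨hx.1, ?_⟩)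
        have : gmap n D hc x ≤ v := by
          have := hcell.2
          linarith
        linarith [hg1, this]
      · refine Or.inr (Or.inr ⟨hx.1, ?_⟩)
        have : v + 1/(n:ℝ)^K ≤ gmap n D hc x := by
          have := hcell.1
          linarith
        linarith [hg2, this]
  calc volume {x : ℝ | x ∈ Set.Ico (0:ℝ) 1 ∧ gmap n D hc x ∈ Set.Icc v (v + 1/(n:ℝ)^K)}
      ≤ volume ({x : ℝ | x ∈ Set.Ico (0:ℝ) 1 ∧ ∀ j < K, pdig D hc x j = c j}
        ∪ ({x : ℝ | x ∈ Set.Ico (0:ℝ) 1 ∧ gmap n D hc x = v}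
          ∪ {x : ℝ | x ∈ Set.Ico (0:ℝ) 1 ∧ gmap n D hc x = v + 1/(n:ℝ)^K})) :=
        measure_mono hsubset
    _ ≤ volume {x : ℝ | x ∈ Set.Ico (0:ℝ) 1 ∧ ∀ j < K, pdig D hc x j = c j}
        + (volume {x : ℝ | x ∈ Set.Ico (0:ℝ) 1 ∧ gmap n D hc x = v}
          + volume {x : ℝ | x ∈ Set.Ico (0:ℝ) 1 ∧ gmap n D hc x = v + 1/(n:ℝ)^K}) :=
        le_trans (measure_union_le _ _) (by gcongr; exact measure_union_le _ _)
    _ ≤ ENNReal.ofReal (1/(D.card:ℝ)^K) + (0 + 0) := by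
        gcongr
        · exact pset_vol hc c K
        · exact le_of_eq (Ey_vol hn hD hc hc2 v)
        · exact le_of_eq (Ey_vol hn hD hc hc2 _)
    _ = ENNReal.ofReal (1/(D.card:ℝ)^K) := by simp

/-- Integer numerator of a word value. -/
def aIntC (n : ℕ) (D : Finset ℤ) (K : ℕ) (c : ℕ → Fin D.card) : ℤ :=
  ∑ j ∈ Finset.range K, dig D (c j) * (n:ℤ)^(K-1-j)

lemma valC_eq_aInt {n : ℕ} (hn : 2 ≤ n) (D : Finset ℤ) (K : ℕ) (c : ℕ → Fin D.card) :
    valC n D K c = (aIntC n D K c : ℝ) / (n:ℝ)^K := by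
  have hn0 : (0:ℝ) < n := by exact_mod_cast Nat.lt_of_lt_of_le Nat.zero_lt_two hn
  rw [aIntC, valC]
  push_cast
  rw [Finset.sum_div]
  refine Finset.sum_congr rfl fun j hj => ?_
  have hjK : j < K := Finset.mem_range.1 hj
  have hexp : (K-1-j) + (j+1) = K := by omega
  rw [show (n:ℝ)^K = (n:ℝ)^(K-1-j) * (n:ℝ)^(j+1) from by rw [← pow_add, hexp]]
  have h1 : (n:ℝ)^(K-1-j) ≠ 0 := by positivity
  have h2 : (n:ℝ)^(j+1) ≠ 0 := by positivity
  field_simp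

lemma card_met {n : ℕ} (hn : 2 ≤ n) {D : Finset ℤ} (hD : ∀ d ∈ D, 0 ≤ d ∧ d < (n:ℤ))
    (hc : 0 < D.card) (k : ℕ) (x₀ δ : ℝ) (hδ2 : δ < 1/(n:ℝ)^k)
    (F : Finset (Fin (k+1) → Fin D.card))
    (hF : ∀ c ∈ F, (Set.Icc (valC n D (k+1) (extC D hc c))
        (valC n D (k+1) (extC D hc c) + 1/(n:ℝ)^(k+1)) ∩ Set.Icc x₀ (x₀+δ)).Nonempty) :
    F.card ≤ D.card ∨ (F.card ≤ D.card + 1 ∧ ((n:ℝ)-1)/(n:ℝ)^(k+1) ≤ δ) := by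
  classical
  have hn0 : (0:ℝ) < n := by exact_mod_cast Nat.lt_of_lt_of_le Nat.zero_lt_two hn
  have hnk : (0:ℝ) < (n:ℝ)^k := by positivity
  have hnk1 : (0:ℝ) < (n:ℝ)^(k+1) := by positivity
  set kk : Fin (k+1) := ⟨k, Nat.lt_succ_self k⟩ with hkk
  have hsplit : ∀ c : Fin (k+1) → Fin D.card, valC n D (k+1) (extC D hc c)
      = (aIntC n D k (extC D hc c) : ℝ)/(n:ℝ)^k + (dig D (c kk) : ℝ)/(n:ℝ)^(k+1) := by
    intro c
    rw [valC, Finset.sum_range_succ]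
    rw [show (∑ j ∈ Finset.range k, (dig D (extC D hc c j) : ℝ) / (n:ℝ)^(j+1))
        = valC n D k (extC D hc c) from rfl]
    rw [valC_eq_aInt hn D k (extC D hc c), extC_lt D hc c (Nat.lt_succ_self k)]
  have hinj : ∀ c c' : Fin (k+1) → Fin D.card,
      aIntC n D k (extC D hc c) = aIntC n D k (extC D hc c') → c kk = c' kk → c = c' := by
    intro c c' h1 h2
    have hvv : valC n D k (extC D hc c) = valC n D k (extC D hc c') := by
      rw [valC_eq_aInt hn D k, valC_eq_aInt hn D k, h1]
    have heq := code_eq_of_close hn hD (extC D hc c) (extC D hc c')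
      (by rw [hvv, sub_self, abs_zero]; positivity)
    funext j
    rcases Nat.lt_or_ge j.val k with hj | hj
    · have h3 := heq j.val hj
      have hj1 : j.val < k + 1 := Nat.lt_succ_of_lt hj
      rw [extC_lt D hc c hj1, extC_lt D hc c' hj1] at h3
      simpa using h3
    · have hjk : j = kk := by
        apply Fin.ext
        show (j:ℕ) = k
        have := j.isLt
        omega
      rw [hjk]; exact h2
  set Y : ℤ := ⌈x₀ * (n:ℝ)^k⌉ with hY
  have hpar_mem : ∀ c ∈ F, aIntC n D k (extC D hc c) = Y - 1
      ∨ aIntC n D k (extC D hc c) = Y := by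
    intro c hcF
    obtain ⟨w, hw1, hw2⟩ := hF c hcF
    have hd := dig_bounds hD (c kk)
    have hsplitc := hsplit c
    set A : ℤ := aIntC n D k (extC D hc c) with hA
    have hdig0 : (0:ℝ) ≤ (dig D (c kk) : ℝ) := by exact_mod_cast hd.1
    have hdign : (dig D (c kk) : ℝ) ≤ (n:ℝ) - 1 := by exact_mod_cast hd.2
    have hb1 : (A : ℝ)/(n:ℝ)^k ≤ w := by
      have h5 := hw1.1
      rw [hsplitc] at h5
      have h6 : (0:ℝ) ≤ (dig D (c kk) : ℝ)/(n:ℝ)^(k+1) := by positivity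
      linarith
    have hb2 : w ≤ (A:ℝ)/(n:ℝ)^k + 1/(n:ℝ)^k := by
      have h5 := hw1.2
      rw [hsplitc] at h5
      have hh : ((dig D (c kk):ℝ))/(n:ℝ)^(k+1) + 1/(n:ℝ)^(k+1) ≤ 1/(n:ℝ)^k := by
        rw [← add_div, div_le_div_iff₀ hnk1 hnk]
        have hps : (n:ℝ)^(k+1) = (n:ℝ)^k * n := pow_succ _ _
        nlinarith
      linarith
    have hx1 : x₀ ≤ w := hw2.1
    have hx2 : w ≤ x₀ + δ := hw2.2
    have hδn : δ * (n:ℝ)^k < 1 := by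
      have := (lt_div_iff₀ hnk).1 hδ2
      linarith
    have hAub : (A:ℝ) ≤ x₀ * (n:ℝ)^k + δ * (n:ℝ)^k := by
      have := (div_le_iff₀ hnk).1 (le_trans hb1 hx2)
      linarith [this]
    have hAlb : x₀ * (n:ℝ)^k - 1 ≤ (A:ℝ) := by
      have h7 : x₀ ≤ (A:ℝ)/(n:ℝ)^k + 1/(n:ℝ)^k := le_trans hx1 hb2
      have h8 : x₀ * (n:ℝ)^k ≤ (A:ℝ) + 1 := by
        have := mul_le_mul_of_nonneg_right h7 hnk.le
        calc x₀ * (n:ℝ)^k ≤ ((A:ℝ)/(n:ℝ)^k + 1/(n:ℝ)^k) * (n:ℝ)^k := this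
          _ = (A:ℝ) + 1 := by field_simp
      linarith
    have hceil1 : x₀ * (n:ℝ)^k ≤ (Y:ℝ) := Int.le_ceil _
    have hceil2 : (Y:ℝ) < x₀ * (n:ℝ)^k + 1 := Int.ceil_lt_add_one _
    have hup : A < Y + 1 := by
      have : (A:ℝ) < (Y:ℝ) + 1 := by linarith
      exact_mod_cast this
    have hdown : (Y:ℤ) - 2 < A := by
      have : (Y:ℝ) - 2 < (A:ℝ) := by linarith
      exact_mod_cast this
    omega
  set F1 := F.filter (fun c => aIntC n D k (extC D hc c) = Y - 1) with hF1
  set F2 := F.filter (fun c => ¬(aIntC n D k (extC D hc c) = Y - 1)) with hF2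
  have hFsplit : F1.card + F2.card = F.card :=
    Finset.card_filter_add_card_filter_not _
  have hF2par : ∀ c ∈ F2, aIntC n D k (extC D hc c) = Y := by
    intro c hc2'
    have hc2'' := Finset.mem_filter.1 hc2'
    rcases hpar_mem c hc2''.1 with h | h
    · exact absurd h hc2''.2
    · exact h
  set S1 := F1.image (fun c => c kk) with hS1
  set S2 := F2.image (fun c => c kk) with hS2
  have hS1card : S1.card = F1.card := by
    refine Finset.card_image_of_injOn fun c hc1 c' hc1' hld => ?_
    have h6 := Finset.mem_filter.1 (Finset.mem_coe.1 hc1)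
    have h7 := Finset.mem_filter.1 (Finset.mem_coe.1 hc1')
    exact hinj c c' (by rw [h6.2, h7.2]) hld
  have hS2card : S2.card = F2.card := by
    refine Finset.card_image_of_injOn fun c hc1 c' hc1' hld => ?_
    exact hinj c c' (by rw [hF2par c (Finset.mem_coe.1 hc1),
      hF2par c' (Finset.mem_coe.1 hc1')]) hld
  have huniv : (Finset.univ : Finset (Fin D.card)).card = D.card := by simp
  rcases Finset.eq_empty_or_nonempty F1 with hF1e | hF1ne
  · left
    have : F1.card = 0 := by rw [hF1e]; simp
    have h9 : S2.card ≤ D.card := le_trans (Finset.card_le_univ _) (le_of_eq huniv)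
    omega
  rcases Finset.eq_empty_or_nonempty F2 with hF2e | hF2ne
  · left
    have : F2.card = 0 := by rw [hF2e]; simp
    have h9 : S1.card ≤ D.card := le_trans (Finset.card_le_univ _) (le_of_eq huniv)
    omega
  have hS1ne : S1.Nonempty := hF1ne.image _
  have hS2ne : S2.Nonempty := hF2ne.image _
  set a1 := S1.min' hS1ne with ha1
  set b2 := S2.max' hS2ne with hb2'
  obtain ⟨c1, hc1F, hc1ld⟩ := Finset.mem_image.1 (S1.min'_mem hS1ne)
  obtain ⟨c2, hc2F, hc2ld⟩ := Finset.mem_image.1 (S2.max'_mem hS2ne)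
  have hc1F' : c1 ∈ F := (Finset.mem_filter.1 hc1F).1
  have hc2F' : c2 ∈ F := (Finset.mem_filter.1 hc2F).1
  obtain ⟨y, hy1, hy2⟩ := hF c1 hc1F'
  obtain ⟨z, hz1, hz2⟩ := hF c2 hc2F'
  have hpar1 : aIntC n D k (extC D hc c1) = Y - 1 := (Finset.mem_filter.1 hc1F).2
  have hpar2 : aIntC n D k (extC D hc c2) = Y := hF2par c2 hc2F
  have hyb : y ≤ ((Y:ℝ)-1)/(n:ℝ)^k + (dig D a1 : ℝ)/(n:ℝ)^(k+1) + 1/(n:ℝ)^(k+1) := by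
    have h5 := hy1.2
    rw [hsplit c1, hpar1, hc1ld] at h5
    push_cast at h5 ⊢
    linarith
  have hzb : (Y:ℝ)/(n:ℝ)^k + (dig D b2 : ℝ)/(n:ℝ)^(k+1) ≤ z := by
    have h5 := hz1.1
    rw [hsplit c2, hpar2, hc2ld] at h5
    exact h5
  have hzy : z - y ≤ δ := by
    have := hy2.1
    have := hz2.2
    linarith
  have hYY : (Y:ℝ)/(n:ℝ)^k = ((Y:ℝ)-1)/(n:ℝ)^k + (n:ℝ)/(n:ℝ)^(k+1) := by
    rw [div_add_div _ _ (ne_of_gt hnk) (ne_of_gt hnk1)]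
    rw [show (n:ℝ)^(k+1) = (n:ℝ)^k * n from by rw [pow_succ]]
    field_simp
    ring
  have hkey : ((n:ℝ) - 1 + (dig D b2 : ℝ) - (dig D a1 : ℝ))/(n:ℝ)^(k+1) ≤ δ := by
    have hexp : ((n:ℝ) - 1 + (dig D b2 : ℝ) - (dig D a1 : ℝ))/(n:ℝ)^(k+1)
        = (n:ℝ)/(n:ℝ)^(k+1) + (dig D b2 : ℝ)/(n:ℝ)^(k+1)
          - (dig D a1 : ℝ)/(n:ℝ)^(k+1) - 1/(n:ℝ)^(k+1) := by ring
    rw [hexp]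
    linarith
  have h1nk : (n:ℝ)/(n:ℝ)^(k+1) = 1/(n:ℝ)^k := by
    rw [show (n:ℝ)^(k+1) = (n:ℝ)^k * n from by rw [pow_succ]]
    field_simp
  have hdig_le : dig D b2 ≤ dig D a1 := by
    by_contra hcon
    push_neg at hcon
    have h6 : (dig D a1 : ℝ) + 1 ≤ (dig D b2 : ℝ) := by exact_mod_cast hcon
    have h7 : 1/(n:ℝ)^k ≤ δ := by
      rw [← h1nk]
      calc (n:ℝ)/(n:ℝ)^(k+1)
          ≤ ((n:ℝ) - 1 + (dig D b2 : ℝ) - (dig D a1 : ℝ))/(n:ℝ)^(k+1) := by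
            apply div_le_div_of_nonneg_right _ hnk1.le
            linarith
        _ ≤ δ := hkey
    linarith
  have hb2a1 : b2 ≤ a1 := (dig_le_iff D).1 hdig_le
  rcases lt_or_eq_of_le hb2a1 with hlt | heq2
  · left
    have hdisj : Disjoint S1 S2 := by
      rw [Finset.disjoint_left]
      intro i hi1 hi2
      have h6 := S1.min'_le i hi1
      have h7 := S2.le_max' i hi2
      rw [← ha1] at h6
      rw [← hb2'] at h7
      exact absurd (lt_of_le_of_lt (le_trans h6 h7) hlt) (lt_irrefl _)
    have h8 : S1.card + S2.card ≤ D.card := by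
      rw [← Finset.card_union_of_disjoint hdisj]
      exact le_trans (Finset.card_le_univ _) (le_of_eq huniv)
    omega
  · right
    constructor
    · have hint : S1 ∩ S2 ⊆ {a1} := by
        intro i hi
        rw [Finset.mem_inter] at hi
        have h6 := S1.min'_le i hi.1
        have h7 := S2.le_max' i hi.2
        rw [← ha1] at h6
        rw [← hb2'] at h7
        rw [Finset.mem_singleton]
        rw [← heq2] at h6
        exact le_antisymm (by rw [← heq2]; exact h7) (by rw [heq2] at h6; exact h6)
      have hcui := Finset.card_union_add_card_inter S1 S2
      have h6 : (S1 ∪ S2).card ≤ D.card := le_trans (Finset.card_le_univ _) (le_of_eq huniv)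
      have h7 : (S1 ∩ S2).card ≤ 1 := le_trans (Finset.card_le_card hint) (by simp)
      omega
    · have h9 : ((n:ℝ)-1)/(n:ℝ)^(k+1)
          = ((n:ℝ) - 1 + (dig D b2 : ℝ) - (dig D a1 : ℝ))/(n:ℝ)^(k+1) := by
        rw [heq2]
        ring
      rw [h9]
      exact hkey

lemma log_ineq {n : ℕ} (hn : 3 ≤ n) :
    Real.log (3/2) * Real.log n ≤ Real.log 2 * Real.log (n-1) := by
  have h2 : (0:ℝ) < Real.log 2 := Real.log_pos (by norm_num)
  rcases eq_or_lt_of_le hn with h3 | h4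
  · -- n = 3
    have hn3 : (n:ℝ) = 3 := by exact_mod_cast h3.symm
    rw [hn3]
    norm_num
    -- goal : log (3/2) * log 3 ≤ log 2 * log 2
    have h98 : Real.log (9/8) ≤ 1/8 := by
      calc Real.log (9/8) ≤ 9/8 - 1 := Real.log_le_sub_one_of_pos (by norm_num)
        _ = 1/8 := by norm_num
    have h98n : (0:ℝ) ≤ Real.log (9/8) := Real.log_nonneg (by norm_num)
    have h32 : Real.log (3/2) + Real.log (3/2) = Real.log 2 + Real.log (9/8) := by
      rw [← Real.log_mul (by norm_num) (by norm_num),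
        ← Real.log_mul (by norm_num) (by norm_num)]
      norm_num
    have h3l : Real.log 3 = Real.log 2 + Real.log (3/2) := by
      rw [← Real.log_mul (by norm_num) (by norm_num)]
      norm_num
    have hl2u : Real.log 2 < 0.6931471808 := Real.log_two_lt_d9
    have hl2l : 0.6931471803 < Real.log 2 := Real.log_two_gt_d9
    nlinarith [sq_nonneg (Real.log 2 - Real.log (3/2))]
  · -- n ≥ 4
    have hn4 : (4:ℝ) ≤ n := by exact_mod_cast h4
    have hn1 : (1:ℝ) < (n:ℝ) - 1 := by linarith
    have hlnn : Real.log (3/2) = Real.log 2 - Real.log (4/3) := by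
      rw [← Real.log_div (by norm_num) (by norm_num)]
      norm_num
    have h43 : (1:ℝ)/4 ≤ Real.log (4/3) := by
      have := Real.log_le_sub_one_of_pos (show (0:ℝ) < 3/4 by norm_num)
      have hinv : Real.log (3/4) = - Real.log (4/3) := by
        rw [← Real.log_inv]
        norm_num
      rw [hinv] at this
      linarith
    have hfr : Real.log n - Real.log (n-1) ≤ 1/3 := by
      have hd : Real.log n - Real.log (n-1) = Real.log ((n:ℝ)/((n:ℝ)-1)) := by
        rw [Real.log_div (by linarith) (by linarith)]
      rw [hd]
      calc Real.log ((n:ℝ)/((n:ℝ)-1)) ≤ (n:ℝ)/((n:ℝ)-1) - 1 :=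
            Real.log_le_sub_one_of_pos (by positivity)
        _ = 1/((n:ℝ)-1) := by field_simp; ring
        _ ≤ 1/3 := by
            rw [div_le_div_iff₀ (by linarith) (by norm_num)]
            linarith
    have hlog4 : Real.log 4 = 2 * Real.log 2 := by
      rw [show (4:ℝ) = 2^2 by norm_num, Real.log_pow]
      push_cast
      ring
    have hln : 2 * Real.log 2 ≤ Real.log n := by
      rw [← hlog4]
      exact Real.log_le_log (by norm_num) hn4
    have hl1 : 0 ≤ Real.log ((n:ℝ)-1) := Real.log_nonneg (by linarith)
    have hl2' : 0 ≤ Real.log (n:ℝ) := Real.log_nonneg (by linarith)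
    -- log2 * log(n-1) - log(3/2) * log n
    --   = log(4/3) * log n - log 2 * (log n - log(n-1))
    rw [hlnn]
    nlinarith [mul_le_mul_of_nonneg_left hfr h2.le,
      mul_le_mul_of_nonneg_right h43 hl2']

lemma numeric_key {n m : ℕ} (hn : 3 ≤ n) (hm : 2 ≤ m) :
    (m:ℝ) + 1 ≤ (m:ℝ) * ((n:ℝ)-1) ^ (Real.logb n m) := by
  have hn0 : (1:ℝ) < n := by exact_mod_cast Nat.lt_of_lt_of_le Nat.one_lt_two (by omega)
  have hm0 : (1:ℝ) < m := by exact_mod_cast Nat.lt_of_lt_of_le Nat.one_lt_two hm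
  have hlogn : 0 < Real.log n := Real.log_pos hn0
  have hlogm : 0 < Real.log m := Real.log_pos hm0
  have hn3 : (3:ℝ) ≤ (n:ℝ) := by exact_mod_cast hn
  have hm2 : (2:ℝ) ≤ (m:ℝ) := by exact_mod_cast hm
  have hn1 : (1:ℝ) ≤ (n:ℝ) - 1 := by linarith
  -- ((n-1))^s ≥ 3/2
  have hmain : (3:ℝ)/2 ≤ ((n:ℝ)-1) ^ (Real.logb n m) := by
    have hlogineq : Real.log (3/2) ≤ Real.logb n m * Real.log ((n:ℝ)-1) := by
      rw [Real.logb, div_mul_eq_mul_div, le_div_iff₀ hlogn]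
      calc Real.log (3/2) * Real.log n ≤ Real.log 2 * Real.log ((n:ℝ)-1) := log_ineq hn
        _ ≤ Real.log m * Real.log ((n:ℝ)-1) := by
            apply mul_le_mul_of_nonneg_right _ (Real.log_nonneg hn1)
            exact Real.log_le_log (by norm_num) (by exact_mod_cast hm)
    calc (3:ℝ)/2 = Real.exp (Real.log (3/2)) := by
          rw [Real.exp_log]; norm_num
      _ ≤ Real.exp (Real.logb n m * Real.log ((n:ℝ)-1)) := Real.exp_le_exp.2 hlogineq
      _ = ((n:ℝ)-1) ^ (Real.logb n m) := by
          rw [← Real.log_rpow (by linarith : (0:ℝ) < (n:ℝ)-1), Real.exp_log]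
          exact Real.rpow_pos_of_pos (by linarith) _
  have h1m : (m:ℝ) + 1 ≤ (m:ℝ) * (3/2) := by linarith
  calc (m:ℝ) + 1 ≤ (m:ℝ) * (3/2) := h1m
    _ ≤ (m:ℝ) * (((n:ℝ)-1) ^ (Real.logb n m)) := by
        apply mul_le_mul_of_nonneg_left hmain (by positivity)

lemma pow_rpow_logb {n m K : ℕ} (hn : 2 ≤ n) (hm : 1 ≤ m) :
    (((n:ℝ))^K) ^ (Real.logb n m) = (m:ℝ)^K := by
  have hn0 : (0:ℝ) < n := by exact_mod_cast Nat.lt_of_lt_of_le Nat.zero_lt_two hn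
  have hn1 : (n:ℝ) ≠ 1 := by
    have : (1:ℝ) < n := by exact_mod_cast Nat.lt_of_lt_of_le Nat.one_lt_two hn
    linarith
  have hm0 : (0:ℝ) < m := by exact_mod_cast hm
  rw [← Real.rpow_natCast (n:ℝ) K, ← Real.rpow_mul hn0.le, mul_comm,
    Real.rpow_mul hn0.le, Real.rpow_logb hn0 hn1 hm0, Real.rpow_natCast]

lemma crux {n : ℕ} (hn : 3 ≤ n) {D : Finset ℤ} (hD : ∀ d ∈ D, 0 ≤ d ∧ d < (n:ℤ))
    (hc : 0 < D.card) (hc2 : 2 ≤ D.card)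
    (V : Set ℝ) (x₀ δ : ℝ) (hδ : 0 < δ) (hV : V ⊆ Set.Icc x₀ (x₀+δ)) :
    volume ((gmap n D hc) ⁻¹' V ∩ Set.Ico (0:ℝ) 1)
      ≤ ENNReal.ofReal ((D.card:ℝ) * δ ^ (Real.logb n D.card)) := by
  classical
  have hn2 : 2 ≤ n := by omega
  have hn0 : (0:ℝ) < n := by exact_mod_cast Nat.lt_of_lt_of_le Nat.zero_lt_two hn2
  have hn1 : (1:ℝ) < n := by exact_mod_cast Nat.lt_of_lt_of_le Nat.one_lt_two hn2
  have hm0 : (0:ℝ) < D.card := by exact_mod_cast hc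
  have hm1 : (1:ℝ) < D.card := by exact_mod_cast hc2
  set s : ℝ := Real.logb n D.card with hs
  have hs0 : 0 ≤ s := Real.logb_nonneg hn1 hm1.le
  have hrn : (n:ℝ) ^ s = D.card := Real.rpow_logb hn0 (by linarith) hm0
  have hns : ∀ K : ℕ, (1/(n:ℝ)^K) ^ s = 1/(D.card:ℝ)^K := by
    intro K
    rw [one_div, one_div, ← Real.rpow_natCast ((n:ℝ)) K, ← Real.rpow_natCast ((D.card:ℝ)) K,
      Real.inv_rpow (by positivity), ← Real.rpow_mul hn0.le, mul_comm,
      Real.rpow_mul hn0.le, hrn]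
  by_cases hcase : 1/(n:ℝ) ≤ δ
  · have h1 : volume ((gmap n D hc) ⁻¹' V ∩ Set.Ico (0:ℝ) 1)
        ≤ volume (Set.Ico (0:ℝ) 1) := measure_mono Set.inter_subset_right
    have h2 : volume (Set.Ico (0:ℝ) 1) = 1 := by simp
    have h3 : (1:ℝ) ≤ (D.card:ℝ) * δ ^ s := by
      have hd1 : (1/(n:ℝ))^s ≤ δ^s := Real.rpow_le_rpow (by positivity) hcase hs0
      have hd2 : (1/(n:ℝ))^s = 1/(D.card:ℝ) := by
        have := hns 1
        simpa using this
      rw [hd2] at hd1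
      calc (1:ℝ) = (D.card:ℝ) * (1/(D.card:ℝ)) := by field_simp
        _ ≤ (D.card:ℝ) * δ^s := by
            apply mul_le_mul_of_nonneg_left hd1 hm0.le
    calc volume ((gmap n D hc) ⁻¹' V ∩ Set.Ico (0:ℝ) 1) ≤ 1 := h1.trans (le_of_eq h2)
      _ = ENNReal.ofReal 1 := by simp
      _ ≤ ENNReal.ofReal ((D.card:ℝ) * δ ^ s) := ENNReal.ofReal_le_ofReal h3
  · push_neg at hcase
    have hex : ∃ j : ℕ, 1/(n:ℝ)^(j+1) ≤ δ := by
      obtain ⟨j, hj⟩ := exists_pow_lt_of_lt_one hδ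
        (show 1/(n:ℝ) < 1 from by rw [div_lt_one hn0]; exact hn1)
      refine ⟨j, ?_⟩
      calc 1/(n:ℝ)^(j+1) = (1/(n:ℝ))^(j+1) := by rw [one_div_pow]
        _ ≤ (1/(n:ℝ))^j := pow_le_pow_of_le_one (by positivity)
            (by rw [div_le_one hn0]; linarith) (Nat.le_succ j)
        _ ≤ δ := hj.le
    obtain ⟨k, hk1, hk2⟩ : ∃ k : ℕ, 1/(n:ℝ)^(k+1) ≤ δ ∧ δ < 1/(n:ℝ)^k := by
      refine ⟨Nat.find hex, Nat.find_spec hex, ?_⟩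
      rcases Nat.eq_zero_or_pos (Nat.find hex) with h0 | h0
      · rw [h0]
        have : δ < 1 := lt_trans hcase (by rw [div_lt_one hn0]; linarith)
        simpa using this
      · have hmin := Nat.find_min hex (show Nat.find hex - 1 < Nat.find hex from by omega)
        rw [show (Nat.find hex - 1)+1 = Nat.find hex from by omega] at hmin
        exact not_le.1 hmin
    set F : Finset (Fin (k+1) → Fin D.card) := Finset.univ.filter (fun c =>
      (Set.Icc (valC n D (k+1) (extC D hc c))
        (valC n D (k+1) (extC D hc c) + 1/(n:ℝ)^(k+1))
        ∩ Set.Icc x₀ (x₀+δ)).Nonempty) with hF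
    have hcover : gmap n D hc ⁻¹' V ∩ Set.Ico (0:ℝ) 1 ⊆
        ⋃ c ∈ F, {x : ℝ | x ∈ Set.Ico (0:ℝ) 1 ∧ gmap n D hc x ∈
          Set.Icc (valC n D (k+1) (extC D hc c))
            (valC n D (k+1) (extC D hc c) + 1/(n:ℝ)^(k+1))} := by
      intro x hx
      set c : Fin (k+1) → Fin D.card := fun j => pdig D hc x j.val with hcdef
      have hecc : ∀ j < k+1, extC D hc c j = pdig D hc x j :=
        fun j hj => extC_lt D hc c hj
      have hval : valC n D (k+1) (extC D hc c) = valC n D (k+1) (pdig D hc x) :=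
        valC_congr hecc
      have hcell := gmap_cell hn2 hD hc x (k+1)
      have hgin : gmap n D hc x ∈ Set.Icc (valC n D (k+1) (extC D hc c))
          (valC n D (k+1) (extC D hc c) + 1/(n:ℝ)^(k+1)) := by
        rw [hval] at *
        exact ⟨hcell.1, hcell.2⟩
      have hcF : c ∈ F := by
        rw [hF, Finset.mem_filter]
        exact ⟨Finset.mem_univ _, ⟨gmap n D hc x, hgin, hV hx.1⟩⟩
      exact Set.mem_biUnion hcF ⟨hx.2, hgin⟩
    have hsum : volume ((gmap n D hc) ⁻¹' V ∩ Set.Ico (0:ℝ) 1)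
        ≤ (F.card : ℝ≥0∞) * ENNReal.ofReal (1/(D.card:ℝ)^(k+1)) := by
      calc volume ((gmap n D hc) ⁻¹' V ∩ Set.Ico (0:ℝ) 1)
          ≤ ∑ c ∈ F, volume {x : ℝ | x ∈ Set.Ico (0:ℝ) 1 ∧ gmap n D hc x ∈
              Set.Icc (valC n D (k+1) (extC D hc c))
                (valC n D (k+1) (extC D hc c) + 1/(n:ℝ)^(k+1))} :=
            le_trans (measure_mono hcover) (measure_biUnion_finset_le _ _)
        _ ≤ ∑ _c ∈ F, ENNReal.ofReal (1/(D.card:ℝ)^(k+1)) :=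
            Finset.sum_le_sum (fun c _ => cell_vol hn2 hD hc hc2 (k+1) (extC D hc c))
        _ = (F.card : ℝ≥0∞) * ENNReal.ofReal (1/(D.card:ℝ)^(k+1)) := by
            rw [Finset.sum_const, nsmul_eq_mul]
    have hcount := card_met hn2 hD hc k x₀ δ hk2 F
      (fun c hcF => (Finset.mem_filter.1 hcF).2)
    have hfinish : (F.card : ℝ) * (1/(D.card:ℝ)^(k+1)) ≤ (D.card:ℝ) * δ ^ s := by
      have hmk : (0:ℝ) < (D.card:ℝ)^(k+1) := by positivity
      rcases hcount with h | ⟨h, hδ3⟩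
      · have hcard : (F.card : ℝ) ≤ D.card := by exact_mod_cast h
        have hd1 : (1/(n:ℝ)^(k+1))^s ≤ δ^s :=
          Real.rpow_le_rpow (by positivity) hk1 hs0
        rw [hns (k+1)] at hd1
        calc (F.card : ℝ) * (1/(D.card:ℝ)^(k+1)) ≤ (D.card:ℝ) * (1/(D.card:ℝ)^(k+1)) := by
              apply mul_le_mul_of_nonneg_right hcard (by positivity)
          _ ≤ (D.card:ℝ) * δ^s := mul_le_mul_of_nonneg_left hd1 hm0.le
      · have hcard : (F.card : ℝ) ≤ (D.card:ℝ) + 1 := by exact_mod_cast h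
        have hd1 : (((n:ℝ)-1)/(n:ℝ)^(k+1))^s ≤ δ^s :=
          Real.rpow_le_rpow (div_nonneg (by linarith) (by positivity)) hδ3 hs0
        have hd2 : (((n:ℝ)-1)/(n:ℝ)^(k+1))^s = ((n:ℝ)-1)^s * (1/(D.card:ℝ)^(k+1)) := by
          rw [show ((n:ℝ)-1)/(n:ℝ)^(k+1) = ((n:ℝ)-1) * (1/(n:ℝ)^(k+1)) from by ring,
            Real.mul_rpow (by linarith) (by positivity), hns (k+1)]
        have hnk := numeric_key hn hc2
        calc (F.card : ℝ) * (1/(D.card:ℝ)^(k+1))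
            ≤ ((D.card:ℝ) + 1) * (1/(D.card:ℝ)^(k+1)) := by
              apply mul_le_mul_of_nonneg_right hcard (by positivity)
          _ ≤ ((D.card:ℝ) * ((n:ℝ)-1)^s) * (1/(D.card:ℝ)^(k+1)) := by
              apply mul_le_mul_of_nonneg_right hnk (by positivity)
          _ = (D.card:ℝ) * (((n:ℝ)-1)^s * (1/(D.card:ℝ)^(k+1))) := by ring
          _ ≤ (D.card:ℝ) * δ^s := by
              apply mul_le_mul_of_nonneg_left _ hm0.le
              rw [← hd2]
              exact hd1
    calc volume ((gmap n D hc) ⁻¹' V ∩ Set.Ico (0:ℝ) 1)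
        ≤ (F.card : ℝ≥0∞) * ENNReal.ofReal (1/(D.card:ℝ)^(k+1)) := hsum
      _ = ENNReal.ofReal ((F.card : ℝ) * (1/(D.card:ℝ)^(k+1))) := by
          rw [ENNReal.ofReal_mul (by positivity), ENNReal.ofReal_natCast]
      _ ≤ ENNReal.ofReal ((D.card:ℝ) * δ ^ s) := ENNReal.ofReal_le_ofReal hfinish

lemma set_bound {n : ℕ} (hn : 3 ≤ n) {D : Finset ℤ} (hD : ∀ d ∈ D, 0 ≤ d ∧ d < (n:ℤ))
    (hc : 0 < D.card) (hc2 : 2 ≤ D.card) (V : Set ℝ) :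
    volume ((gmap n D hc) ⁻¹' V ∩ Set.Ico (0:ℝ) 1)
      ≤ ENNReal.ofReal (D.card:ℝ)
        * ⨆ _ : V.Nonempty, (EMetric.diam V) ^ (Real.logb n D.card) := by
  have hn2 : 2 ≤ n := by omega
  have hn1 : (1:ℝ) < n := by exact_mod_cast Nat.lt_of_lt_of_le Nat.one_lt_two hn2
  have hm0 : (0:ℝ) < D.card := by exact_mod_cast hc
  have hm1 : (1:ℝ) < D.card := by exact_mod_cast hc2
  have hs0 : 0 < Real.logb n D.card := Real.logb_pos hn1 hm1
  rcases Set.eq_empty_or_nonempty V with hVe | hV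
  · simp [hVe]
  rw [iSup_pos hV]
  rcases eq_or_ne (EMetric.diam V) ⊤ with hd | hd
  · rw [hd, ENNReal.top_rpow_of_pos hs0, ENNReal.mul_top (by
      simp only [ne_eq, ENNReal.ofReal_eq_zero, not_le]
      exact hm0)]
    exact le_top
  · have hbdd : Bornology.IsBounded V := Metric.isBounded_iff_ediam_ne_top.2 hd
    set δt := (EMetric.diam V).toReal with hδt
    rcases eq_or_lt_of_le (show (0:ℝ) ≤ δt from ENNReal.toReal_nonneg) with h0 | h0
    · -- diameter zero: V is a singleton
      have hdiam0 : EMetric.diam V = 0 := by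
        rcases (ENNReal.toReal_eq_zero_iff _).1 h0.symm with h | h
        · exact h
        · exact absurd h hd
      have hsing : V.Subsingleton := EMetric.diam_eq_zero_iff.1 hdiam0
      obtain ⟨y, hy⟩ := hV
      have hVy : V = {y} := hsing.eq_singleton_of_mem hy
      have hEy := Ey_vol hn2 hD hc hc2 y
      have hset : (gmap n D hc) ⁻¹' V ∩ Set.Ico (0:ℝ) 1
          = {x : ℝ | x ∈ Set.Ico (0:ℝ) 1 ∧ gmap n D hc x = y} := by
        rw [hVy]
        ext x
        simp only [Set.mem_inter_iff, Set.mem_preimage, Set.mem_singleton_iff,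
          Set.mem_setOf_eq]
        tauto
      rw [hset, hEy]
      exact zero_le
    · have hsub : V ⊆ Set.Icc (sInf V) (sInf V + δt) := by
        intro w hw
        have hbddb : BddBelow V := hbdd.bddBelow
        refine ⟨csInf_le hbddb hw, ?_⟩
        have hinf : w - δt ≤ sInf V := by
          apply le_csInf ⟨w, hw⟩
          intro z hz
          have hdist : dist w z ≤ δt := by
            have := Metric.dist_le_diam_of_mem hbdd hw hz
            exact this
          rw [Real.dist_eq] at hdist
          have := (abs_le.1 hdist).2
          linarith
        linarith
      have h := crux hn hD hc hc2 V (sInf V) δt h0 hsub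
      calc volume ((gmap n D hc) ⁻¹' V ∩ Set.Ico (0:ℝ) 1)
          ≤ ENNReal.ofReal ((D.card:ℝ) * δt ^ (Real.logb n D.card)) := h
        _ = ENNReal.ofReal (D.card:ℝ)
            * ENNReal.ofReal (δt ^ (Real.logb n D.card)) :=
            ENNReal.ofReal_mul hm0.le
        _ = ENNReal.ofReal (D.card:ℝ) * (EMetric.diam V) ^ (Real.logb n D.card) := by
            congr 1
            rw [← ENNReal.ofReal_rpow_of_pos h0, ENNReal.ofReal_toReal hd]

lemma lower_bound {n : ℕ} (hn : 3 ≤ n) {D : Finset ℤ} (hD : ∀ d ∈ D, 0 ≤ d ∧ d < (n:ℤ))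
    (hc : 0 < D.card) (hc2 : 2 ≤ D.card) :
    ENNReal.ofReal (1/(D.card:ℝ)) ≤ μH[Real.logb n D.card] (cantorC n D) := by
  have hn2 : 2 ≤ n := by omega
  have hm0 : (0:ℝ) < D.card := by exact_mod_cast hc
  rw [MeasureTheory.Measure.hausdorffMeasure_apply]
  refine le_iSup_of_le (1:ℝ≥0∞) ?_
  rw [iSup_pos zero_lt_one]
  refine le_iInf fun t => le_iInf fun hcov => le_iInf fun _ => ?_
  have hsub : Set.Ico (0:ℝ) 1 ⊆ ⋃ i, ((gmap n D hc) ⁻¹' (t i) ∩ Set.Ico (0:ℝ) 1) := by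
    intro x hx
    have hgx := gmap_mem hn2 hD hc x
    obtain ⟨i, hi⟩ := Set.mem_iUnion.1 (hcov hgx)
    exact Set.mem_iUnion.2 ⟨i, ⟨hi, hx⟩⟩
  have h1 : (1:ℝ≥0∞) ≤ ∑' i, volume ((gmap n D hc) ⁻¹' (t i) ∩ Set.Ico (0:ℝ) 1) := by
    calc (1:ℝ≥0∞) = volume (Set.Ico (0:ℝ) 1) := by simp
      _ ≤ volume (⋃ i, ((gmap n D hc) ⁻¹' (t i) ∩ Set.Ico (0:ℝ) 1)) := measure_mono hsub
      _ ≤ ∑' i, volume ((gmap n D hc) ⁻¹' (t i) ∩ Set.Ico (0:ℝ) 1) := measure_iUnion_le _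
  have h2 : ∑' i, volume ((gmap n D hc) ⁻¹' (t i) ∩ Set.Ico (0:ℝ) 1)
      ≤ ENNReal.ofReal (D.card:ℝ)
        * ∑' i, ⨆ _ : (t i).Nonempty, (EMetric.diam (t i)) ^ (Real.logb n D.card) := by
    rw [← ENNReal.tsum_mul_left]
    exact ENNReal.tsum_le_tsum fun i => set_bound hn hD hc hc2 (t i)
  have hT := le_trans h1 h2
  have hne0 : ENNReal.ofReal (D.card:ℝ) ≠ 0 := by
    simp only [ne_eq, ENNReal.ofReal_eq_zero, not_le]
    exact hm0
  have hnetop : ENNReal.ofReal (D.card:ℝ) ≠ ⊤ := ENNReal.ofReal_ne_top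
  have hofr : ENNReal.ofReal (1/(D.card:ℝ)) = (ENNReal.ofReal (D.card:ℝ))⁻¹ := by
    rw [one_div, ENNReal.ofReal_inv_of_pos hm0]
  rw [hofr]
  calc (ENNReal.ofReal (D.card:ℝ))⁻¹
      ≤ (ENNReal.ofReal (D.card:ℝ))⁻¹ * (ENNReal.ofReal (D.card:ℝ)
        * ∑' i, ⨆ _ : (t i).Nonempty, (EMetric.diam (t i)) ^ (Real.logb n D.card)) := by
        conv_lhs => rw [← mul_one ((ENNReal.ofReal (D.card:ℝ))⁻¹)]
        exact mul_le_mul_right hT _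
    _ = ∑' i, ⨆ _ : (t i).Nonempty, (EMetric.diam (t i)) ^ (Real.logb n D.card) := by
        rw [← mul_assoc, ENNReal.inv_mul_cancel hne0 hnetop, one_mul]

lemma upper_bound {n : ℕ} (hn : 3 ≤ n) {D : Finset ℤ} (hD : ∀ d ∈ D, 0 ≤ d ∧ d < (n:ℤ))
    (hc : 0 < D.card) (hc2 : 2 ≤ D.card) :
    μH[Real.logb n D.card] (cantorC n D) ≤ 1 := by
  classical
  have hn2 : 2 ≤ n := by omega
  have hn0 : (0:ℝ) < n := by exact_mod_cast Nat.lt_of_lt_of_le Nat.zero_lt_two hn2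
  have hn1 : (1:ℝ) < n := by exact_mod_cast Nat.lt_of_lt_of_le Nat.one_lt_two hn2
  have hm0 : (0:ℝ) < D.card := by exact_mod_cast hc
  have hr : Tendsto (fun K : ℕ => ENNReal.ofReal (1/(n:ℝ)^K)) atTop (𝓝 0) := by
    have hrr : Tendsto (fun K : ℕ => 1/(n:ℝ)^K) atTop (𝓝 0) :=
      Tendsto.div_atTop tendsto_const_nhds (tendsto_pow_atTop_atTop_of_one_lt hn1)
    have := ENNReal.tendsto_ofReal hrr
    simpa using this
  have hle := MeasureTheory.Measure.hausdorffMeasure_le_liminf_tsum (Real.logb n D.card)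
    (cantorC n D) (l := atTop) (ι := fun K => Fin K → Fin D.card)
    (fun K => ENNReal.ofReal (1/(n:ℝ)^K)) hr
    (fun K c => Set.Icc (valC n D K (extC D hc c))
      (valC n D K (extC D hc c) + 1/(n:ℝ)^K))
    (by
      refine Filter.Eventually.of_forall fun K => fun c => ?_
      rw [Real.ediam_Icc]
      simp)
    (by
      refine Filter.Eventually.of_forall fun K => ?_
      intro x hx
      obtain ⟨f, hfD, hfsum⟩ := hx
      have hfb : ∀ j, 0 ≤ f j ∧ f j ≤ (n:ℤ) - 1 := by
        intro j
        have := hD _ (hfD j)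
        omega
      set c : Fin K → Fin D.card := fun j =>
        (D.orderIsoOfFin rfl).symm ⟨f j.val, hfD j.val⟩ with hcdef
      have hdig : ∀ j : ℕ, (hj : j < K) → (dig D (extC D hc c j) : ℝ) = (f j : ℝ) := by
        intro j hj
        rw [extC_lt D hc c hj]
        show ((D.orderIsoOfFin rfl ((D.orderIsoOfFin rfl).symm ⟨f j, hfD j⟩) :
          {x // x ∈ D}) : ℤ) = (f j : ℝ)
        rw [OrderIso.apply_symm_apply]
      have hval : valC n D K (extC D hc c)
          = ∑ j ∈ Finset.range K, (f j : ℝ) / (n:ℝ)^(j+1) := by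
        refine Finset.sum_congr rfl fun j hj => ?_
        rw [hdig j (Finset.mem_range.1 hj)]
      have hsplit := split_sum hn2 f hfb hfsum K
      have ht1 := tail_nonneg hn2 f hfb K
      have ht2 := tail_le hn2 f hfb K
      refine Set.mem_iUnion.2 ⟨c, ?_⟩
      rw [Set.mem_Icc, hval]
      constructor
      · rw [hsplit]; linarith
      · rw [hsplit]; linarith)
  refine le_trans hle ?_
  have hconst : ∀ K : ℕ, (∑' c : Fin K → Fin D.card,
      (Metric.ediam (Set.Icc (valC n D K (extC D hc c))
        (valC n D K (extC D hc c) + 1/(n:ℝ)^K))) ^ (Real.logb n D.card)) = 1 := by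
    intro K
    have hdiam : ∀ c : Fin K → Fin D.card,
        (Metric.ediam (Set.Icc (valC n D K (extC D hc c))
          (valC n D K (extC D hc c) + 1/(n:ℝ)^K))) ^ (Real.logb n D.card)
        = ENNReal.ofReal (1/(D.card:ℝ)^K) := by
      intro c
      rw [Real.ediam_Icc]
      rw [show valC n D K (extC D hc c) + 1/(n:ℝ)^K - valC n D K (extC D hc c)
        = 1/(n:ℝ)^K from by ring]
      rw [ENNReal.ofReal_rpow_of_pos (by positivity)]
      congr 1
      rw [one_div, one_div, ← Real.rpow_natCast ((n:ℝ)) K,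
        ← Real.rpow_natCast ((D.card:ℝ)) K,
        Real.inv_rpow (by positivity), ← Real.rpow_mul hn0.le, mul_comm,
        Real.rpow_mul hn0.le, Real.rpow_logb hn0 (by linarith) hm0]
    rw [tsum_congr hdiam, tsum_fintype, Finset.sum_const, Finset.card_univ]
    rw [Fintype.card_fun, Fintype.card_fin, Fintype.card_fin]
    rw [nsmul_eq_mul,
      show ((D.card ^ K : ℕ) : ℝ≥0∞) = ENNReal.ofReal ((D.card^K : ℕ) : ℝ) from
        (ENNReal.ofReal_natCast _).symm,
      ← ENNReal.ofReal_mul (by positivity)]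
    push_cast
    rw [show (D.card:ℝ)^K * (1/(D.card:ℝ)^K) = 1 from by field_simp]
    simp
  have hfun : (fun K : ℕ => ∑' c : Fin K → Fin D.card,
      (Metric.ediam (Set.Icc (valC n D K (extC D hc c))
        (valC n D K (extC D hc c) + 1/(n:ℝ)^K))) ^ (Real.logb n D.card))
      = fun _ => (1:ℝ≥0∞) := funext hconst
  rw [hfun, Filter.liminf_const]

end CantorAux

/-- for `s = log_n m`, `1/m ≤ H^s(C) ≤ 1`. -/
theorem hausdorff_measure_cantorC_bounds (n : ℕ) (hn : 3 ≤ n) (D : Finset ℤ)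
    (hD : ∀ d ∈ D, 0 ≤ d ∧ d < (n : ℤ)) (h0 : (0 : ℤ) ∈ D) (hm : 2 ≤ D.card) :
    ENNReal.ofReal (1 / (D.card : ℝ)) ≤ μH[Real.logb n D.card] (cantorC n D) ∧
      μH[Real.logb n D.card] (cantorC n D) ≤ 1 := by
  have hc : 0 < D.card := by omega
  exact ⟨CantorAux.lower_bound hn hD hc hm, CantorAux.upper_bound hn hD hc hm⟩
end
end
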